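/- arXiv:2206.10913 — 8 statements merged into one kernel-verified Lean document; each statement's English description precedes it below -/
import Mathlib

section
/- Let f ∈ ℂ[z_1,…,z_n] be a stable polynomial and let w ∈ ℝ^n, w ≠ 0. Then the initial form in_w(f) is stable. -/
open MvPolynomial

/-- A polynomial `f ∈ ℂ[z_1,…,z_n]` is stable if `f(z) ≠ 0` whenever all
imaginary parts of the coordinates of `z` are positive. -/
def Stable {σ : Type*} (f : MvPolynomial σ ℂ) : Prop :=
  ∀ z : σ → ℂ, (∀ i, 0 < (z i).im) → eval z f ≠ 0

open scoped Classical in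
/-- The initial form of `f` with respect to the functional `w`: the sum of the
terms of `f` whose exponent vectors maximize `⟨w, ·⟩` over the support of `f`. -/
noncomputable def initialForm {n : ℕ} (w : Fin n → ℝ) (f : MvPolynomial (Fin n) ℂ) :
    MvPolynomial (Fin n) ℂ :=
  ∑ α ∈ f.support.filter
      (fun α => ∀ β ∈ f.support, ∑ j, w j * (β j : ℝ) ≤ ∑ j, w j * (α j : ℝ)),
    monomial α (coeff α f)

open Filter Metric Finsupp Topology

/-!
Rescaling `z_j ↦ e^{τ w_j} z_j` preserves the upper half-plane, so with `m` the largest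
`w`-weight on the support of `f`, the polynomials `e^{-τ m} f(e^{τ w} z)` have no zeros in the
upper half-space. As `τ → ∞` they converge locally uniformly to `in_w(f)`, because every monomial
of smaller weight is damped by `e^{τ (⟨w, α⟩ - m)}`. The limit is a nonzero polynomial, so a
Hurwitz-type argument shows that it has no zeros in the upper half-space either.
-/

theorem tendstoUniformlyOn_of_norm_sub_le {ι β E : Type*} [SeminormedAddCommGroup E]
    {l : Filter ι} {F : ι → β → E} {f : β → E} {s : Set β} {b : ι → ℝ}
    (hb : Tendsto b l (𝓝 0)) (hFb : ∀ᶠ i in l, ∀ x ∈ s, ‖F i x - f x‖ ≤ b i) :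
    TendstoUniformlyOn F f l s := by
  refine Metric.tendstoUniformlyOn_iff.2 fun ε hε => ?_
  filter_upwards [hFb, hb.eventually_lt_const hε] with i hi hbi x hx
  rw [dist_comm, dist_eq_norm]
  exact (hi x hx).trans_lt hbi

-- Minimum modulus principle.
theorem le_norm_of_forall_mem_sphere_le_norm {h : ℂ → ℂ} {c : ℂ} {s δ : ℝ} (hs : 0 < s)
    (hd : DifferentiableOn ℂ h (closedBall c s)) (hne : ∀ u ∈ closedBall c s, h u ≠ 0)
    (hδ : 0 < δ) (hδh : ∀ u ∈ sphere c s, δ ≤ ‖h u‖) : δ ≤ ‖h c‖ := by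
  have hinv : ‖(h c)⁻¹‖ ≤ δ⁻¹ := by
    refine Complex.norm_le_of_forall_mem_frontier_norm_le (f := fun u => (h u)⁻¹) isBounded_ball
      (DifferentiableOn.diffContOnCl ?_) (fun u hu => ?_) (subset_closure (mem_ball_self hs))
    · rw [closure_ball c hs.ne']
      exact hd.inv hne
    · rw [frontier_ball c hs.ne'] at hu
      rw [norm_inv]
      exact inv_anti₀ hδ (hδh u hu)
  rw [norm_inv] at hinv
  exact (inv_le_inv₀ (norm_pos_iff.2 (hne c (mem_closedBall_self hs.le))) hδ).1 hinv

-- A form of Hurwitz's theorem.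
theorem ne_zero_of_tendstoUniformlyOn_closedBall {ι : Type*} {l : Filter ι} [l.NeBot]
    {G : ι → ℂ → ℂ} {q : ℂ → ℂ} {c : ℂ} {s : ℝ} (hs : 0 < s)
    (hG : ∀ᶠ i in l, DifferentiableOn ℂ (G i) (closedBall c s) ∧ ∀ u ∈ closedBall c s, G i u ≠ 0)
    (hGq : TendstoUniformlyOn G q l (closedBall c s))
    (hq : ContinuousOn q (sphere c s)) (hq0 : ∀ u ∈ sphere c s, q u ≠ 0) : q c ≠ 0 := by
  obtain ⟨u₀, hu₀, hmin⟩ :=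
    (isCompact_sphere c s).exists_isMinOn (NormedSpace.sphere_nonempty.2 hs.le) hq.norm
  set δ := ‖q u₀‖
  have hδ : 0 < δ := norm_pos_iff.2 (hq0 u₀ hu₀)
  obtain ⟨i, ⟨hd, hne⟩, hclose⟩ :=
    (hG.and (Metric.tendstoUniformlyOn_iff.1 hGq (δ / 2) (half_pos hδ))).exists
  have hsphere : ∀ u ∈ sphere c s, δ / 2 ≤ ‖G i u‖ := fun u hu => by
    have hqu : δ ≤ ‖q u‖ := hmin hu
    have hGu := hclose u (sphere_subset_closedBall hu)
    rw [dist_eq_norm] at hGu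
    linarith [norm_sub_norm_le (q u) (G i u)]
  have hGc := le_norm_of_forall_mem_sphere_le_norm hs hd hne (half_pos hδ) hsphere
  have hqc := hclose c (mem_closedBall_self hs.le)
  intro hc
  rw [hc, dist_zero_left] at hqc
  linarith

theorem Polynomial.exists_mem_Ioo_forall_mem_sphere_eval_ne_zero {Q : Polynomial ℂ} (hQ : Q ≠ 0)
    {ε : ℝ} (hε : 0 < ε) : ∃ s ∈ Set.Ioo 0 ε, ∀ u ∈ sphere (0 : ℂ) s, Q.eval u ≠ 0 := by
  obtain ⟨s, hs, hsQ⟩ :=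
    ((Set.Ioo_infinite hε).sdiff (Q.roots.toFinset.image (‖·‖)).finite_toSet).nonempty
  refine ⟨s, hs, fun u hu hQu => hsQ ?_⟩
  simp only [Finset.coe_image, Set.mem_image, Finset.mem_coe, Multiset.mem_toFinset]
  exact ⟨u, (Polynomial.mem_roots hQ).2 hQu, by simpa using hu⟩

theorem isOpen_setOf_forall_im_pos {σ : Type*} [Finite σ] :
    IsOpen {z : σ → ℂ | ∀ i, 0 < (z i).im} := by
  rw [Set.ofPred_forall]
  exact isOpen_iInter_of_finite fun i =>
    isOpen_lt continuous_const (Complex.continuous_im.comp (continuous_apply i))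

namespace MvPolynomial

variable {σ : Type*}

theorem differentiable_eval [Fintype σ] {𝕜 : Type*} [NontriviallyNormedField 𝕜]
    (p : MvPolynomial σ 𝕜) : Differentiable 𝕜 fun x : σ → 𝕜 => eval x p := by
  induction p using MvPolynomial.induction_on with
  | C a => simp only [eval_C]; exact differentiable_const a
  | add p q hp hq => simp only [map_add]; exact hp.add hq
  | mul_X p i hp => simp only [map_mul, eval_X]; exact hp.mul (differentiable_apply i)

theorem exists_polynomial_eval_eq_eval_line (p : MvPolynomial σ ℂ) (z v : σ → ℂ) :
    ∃ Q : Polynomial ℂ, ∀ u, Q.eval u = eval (z + u • v) p := by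
  refine ⟨aeval (fun i => Polynomial.C (z i) + Polynomial.X * Polynomial.C (v i)) p, fun u => ?_⟩
  rw [← Polynomial.coe_aeval_eq_eval, comp_aeval_apply]
  simp only [map_add, map_mul, Polynomial.coe_aeval_eq_eval, Polynomial.eval_C, Polynomial.eval_X]
  rw [aeval_eq_eval]
  rfl

theorem weightedHomogeneousComponent_weight_ne_zero {M R : Type*} [CommSemiring R]
    [AddCommMonoid M] {w : σ → M} {f : MvPolynomial σ R} {α : σ →₀ ℕ} (hα : α ∈ f.support) :
    weightedHomogeneousComponent w (weight w α) f ≠ 0 := by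
  classical
  refine ne_zero_iff.2 ⟨α, ?_⟩
  rwa [coeff_weightedHomogeneousComponent, if_pos rfl, ← mem_support_iff]

theorem eval_exp_smul_monomial (w : σ → ℝ) (τ : ℝ) (x : σ → ℂ) (α : σ →₀ ℕ) (c : ℂ) :
    eval (fun i => (Real.exp (τ * w i) : ℂ) * x i) (monomial α c) =
      Real.exp (τ * weight w α) * eval x (monomial α c) := by
  have hexp : (α.prod fun i e => (Real.exp (τ * w i) : ℂ) ^ e) = Real.exp (τ * weight w α) := by
    rw [weight_apply, Finsupp.sum, Finset.mul_sum, Real.exp_sum, Complex.ofReal_prod, Finsupp.prod]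
    refine Finset.prod_congr rfl fun i _ => ?_
    rw [← Complex.ofReal_pow, ← Real.exp_nat_mul, nsmul_eq_mul]
    ring_nf
  simp only [eval_monomial, mul_pow, Finsupp.prod_mul, hexp]
  ring

theorem eval_exp_smul (w : σ → ℝ) (τ : ℝ) (x : σ → ℂ) (f : MvPolynomial σ ℂ) :
    eval (fun i => (Real.exp (τ * w i) : ℂ) * x i) f =
      ∑ α ∈ f.support, Real.exp (τ * weight w α) * eval x (monomial α (coeff α f)) := by
  conv_lhs => rw [f.as_sum]
  simp only [map_sum, eval_exp_smul_monomial]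

theorem tendstoUniformlyOn_exp_smul_eval {w : σ → ℝ} {m : ℝ} {f : MvPolynomial σ ℂ}
    (hm : ∀ α ∈ f.support, weight w α ≤ m) {K : Set (σ → ℂ)} (hK : IsCompact K) :
    TendstoUniformlyOn
      (fun τ x => Real.exp (-(τ * m)) * eval (fun i => (Real.exp (τ * w i) : ℂ) * x i) f)
      (fun x => eval x (weightedHomogeneousComponent w m f)) atTop K := by
  classical
  choose C hC using fun α : σ →₀ ℕ =>
    hK.exists_bound_of_continuousOn (continuous_eval (monomial α (coeff α f))).continuousOn
  set S := f.support.filter (weight w · ≠ m)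
  have hdiff : ∀ τ x, Real.exp (-(τ * m)) * eval (fun i => (Real.exp (τ * w i) : ℂ) * x i) f -
      eval x (weightedHomogeneousComponent w m f) =
        ∑ α ∈ S, Real.exp (τ * (weight w α - m)) * eval x (monomial α (coeff α f)) := by
    intro τ x
    have hexp : ∀ α : σ →₀ ℕ, (Real.exp (-(τ * m)) : ℂ) * (Real.exp (τ * weight w α)) =
        Real.exp (τ * (weight w α - m)) := fun α => by
      rw [← Complex.ofReal_mul, ← Real.exp_add]; ring_nf
    simp only [eval_exp_smul, Finset.mul_sum, ← mul_assoc, hexp]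
    rw [← Finset.sum_filter_add_sum_filter_not f.support (weight w · = m),
      weightedHomogeneousComponent_apply, map_sum, add_sub_right_comm, ← Finset.sum_sub_distrib,
      Finset.sum_eq_zero fun α hα => by simp [(Finset.mem_filter.1 hα).2], zero_add]
  refine tendstoUniformlyOn_of_norm_sub_le
    (b := fun τ => ∑ α ∈ S, Real.exp (τ * (weight w α - m)) * C α) ?_ ?_
  · rw [← Finset.sum_const_zero (s := S)]
    refine tendsto_finsetSum S fun α hα => ?_
    have hneg : weight w α - m < 0 := by
      obtain ⟨hα, hne⟩ := Finset.mem_filter.1 hα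
      exact sub_neg.2 ((hm α hα).lt_of_ne hne)
    simpa using
      (Real.tendsto_exp_atBot.comp (tendsto_id.atTop_mul_const_of_neg hneg)).mul_const (C α)
  · refine Eventually.of_forall fun τ x hx => ?_
    rw [hdiff]
    refine (norm_sum_le _ _).trans (Finset.sum_le_sum fun α _ => ?_)
    rw [norm_mul, Complex.norm_real, Real.norm_of_nonneg (Real.exp_pos _).le]
    exact mul_le_mul_of_nonneg_left (hC α x hx) (Real.exp_pos _).le

end MvPolynomial

theorem Stable.ne_zero {σ : Type*} {f : MvPolynomial σ ℂ} (hf : Stable f) : f ≠ 0 := by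
  rintro rfl
  exact hf (fun _ => Complex.I) (fun _ => by simp) (map_zero _)

theorem Stable.eval_exp_smul_ne_zero {σ : Type*} {f : MvPolynomial σ ℂ} (hf : Stable f)
    (w : σ → ℝ) (τ : ℝ) {z : σ → ℂ} (hz : ∀ j, 0 < (z j).im) :
    eval (fun i => (Real.exp (τ * w i) : ℂ) * z i) f ≠ 0 :=
  hf _ fun i => by
    rw [Complex.im_ofReal_mul]
    exact mul_pos (Real.exp_pos _) (hz i)

/- Restrict to the complex line through a zero `z` and a non-zero `z₁` of `p`: on a small circle
around `z` avoiding the finitely many zeros of `p` on that line, the one-variable lemma applies. -/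
theorem Stable.of_tendstoLocallyUniformly {σ : Type*} [Fintype σ] {ι : Type*} {l : Filter ι}
    [l.NeBot] {F : ι → (σ → ℂ) → ℂ} {p : MvPolynomial σ ℂ} (hp : p ≠ 0)
    (hF : ∀ᶠ i in l, Differentiable ℂ (F i) ∧ ∀ z : σ → ℂ, (∀ j, 0 < (z j).im) → F i z ≠ 0)
    (hFp : TendstoLocallyUniformly F (fun z => eval z p) l) : Stable p := by
  intro z hz hpz
  obtain ⟨z₁, hpz₁⟩ : ∃ z₁, eval z₁ p ≠ 0 := by
    by_contra! h
    exact hp (MvPolynomial.funext fun x => by simpa using h x)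
  set line : ℂ → σ → ℂ := fun u => z + u • (z₁ - z)
  have hline : Differentiable ℂ line := (differentiable_id.smul_const _).const_add z
  obtain ⟨Q, hQ⟩ := exists_polynomial_eval_eq_eval_line p z (z₁ - z)
  have hQ0 : Q ≠ 0 := by
    rintro rfl
    exact hpz₁ (by simpa [line] using (hQ 1).symm)
  obtain ⟨ε, hε, hball⟩ :=
    Metric.isOpen_iff.1 (isOpen_setOf_forall_im_pos.preimage hline.continuous) 0
      (by simpa [line] using hz)
  obtain ⟨s, ⟨hs, hsε⟩, hsQ⟩ := Polynomial.exists_mem_Ioo_forall_mem_sphere_eval_ne_zero hQ0 hε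
  refine ne_zero_of_tendstoUniformlyOn_closedBall (l := l) (G := fun i => F i ∘ line)
    (q := fun u => eval (line u) p) hs ?_ ?_
    ((continuous_eval p).comp hline.continuous).continuousOn
    (fun u hu => by simpa [line, ← hQ] using hsQ u hu) (by simpa [line] using hpz)
  · filter_upwards [hF] with i hi
    exact ⟨(hi.1.comp hline).differentiableOn,
      fun u hu => hi.2 _ (hball (closedBall_subset_ball hsε hu))⟩
  · exact ((tendstoLocallyUniformly_iff_forall_isCompact.1 hFp _
      ((isCompact_closedBall 0 s).image hline.continuous)).comp line).mono
      (Set.subset_preimage_image _ _)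

theorem Finsupp.weight_eq_sum_mul {σ R : Type*} [Fintype σ] [CommSemiring R] (w : σ → R)
    (α : σ →₀ ℕ) : weight w α = ∑ j, w j * (α j : R) := by
  simp only [weight_eq_sum, nsmul_eq_mul, mul_comm]

theorem initialForm_eq_weightedHomogeneousComponent {n : ℕ} {w : Fin n → ℝ}
    {f : MvPolynomial (Fin n) ℂ} {α : Fin n →₀ ℕ} (hα : α ∈ f.support)
    (hmax : ∀ β ∈ f.support, weight w β ≤ weight w α) :
    initialForm w f = weightedHomogeneousComponent w (weight w α) f := by
  classical
  rw [initialForm, weightedHomogeneousComponent_apply]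
  refine Finset.sum_congr (Finset.filter_congr fun β hβ => ?_) fun _ _ => rfl
  simp only [← weight_eq_sum_mul]
  exact ⟨fun h => le_antisymm (hmax β hβ) (h α hα), fun h γ hγ => h ▸ hmax γ hγ⟩

theorem stable_initialForm_general {n : ℕ} (f : MvPolynomial (Fin n) ℂ) (w : Fin n → ℝ)
    (hf : Stable f) : Stable (initialForm w f) := by
  obtain ⟨α, hα, hmax⟩ :=
    f.support.exists_max_image (weight w) (support_nonempty.2 hf.ne_zero)
  rw [initialForm_eq_weightedHomogeneousComponent hα hmax]
  refine Stable.of_tendstoLocallyUniformly (weightedHomogeneousComponent_weight_ne_zero hα)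
    (Eventually.of_forall fun τ => ⟨?_, fun z hz => ?_⟩)
    (tendstoLocallyUniformly_iff_forall_isCompact.2 fun K hK =>
      tendstoUniformlyOn_exp_smul_eval hmax hK)
  · exact ((differentiable_eval f).comp (differentiable_pi.2 fun i =>
      (differentiable_apply i).const_mul _)).const_mul _
  · exact mul_ne_zero (by exact_mod_cast (Real.exp_pos _).ne') (hf.eval_exp_smul_ne_zero w τ hz)

/-- If `f` is stable and `w ≠ 0`, then the initial form `in_w(f)` is stable. -/
theorem stable_initialForm {n : ℕ} (f : MvPolynomial (Fin n) ℂ) (w : Fin n → ℝ)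
    (hf : Stable f) (hw : w ≠ 0) : Stable (initialForm w f) :=
  stable_initialForm_general f w hf
end

section
/- Let K ⊆ ℝ^n be a closed convex cone, let f ∈ ℂ[z_1,…,z_n] be K-stable, let a ∈ ℂ^n and v^(1), …, v^(k) ∈ ℝ^n. Set K' = pos{v^(1),…,v^(k)}, the cone of non-negative combinations of v^(1),…,v^(k), and assume Im(a) + K' ⊆ K. Then the polynomial g ∈ ℂ[z_1,…,z_k] defined by g(z_1,…,z_k) = f(a + Σ_{j=1}^k z_j v^(j)) is stable or the zero polynomial. -/
/-!
Suppose `g(z₀) = 0` with `Im z₀ > 0` and restrict to a line `t ↦ z₀ + t (w - z₀)` with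
`g(w) ≠ 0`, on which `t = 0` is an isolated zero. Let `ζ(t) = a + Σ_j z_j v^(j)` be the
corresponding point and fix `u` in the relative interior of `K`. For `0 < s ≤ 1` the imaginary part
of `s i u + (1 - s) ζ(t)` is `s u + (1 - s) Im ζ(t)`, which lies in the relative interior of `K`
because `Im ζ(t) ∈ K` for small `t`; so `f` does not vanish there. By Hurwitz's theorem (a
consequence of the minimum modulus principle) the zero at `s = 0` persists for small `s > 0`,
a contradiction.
-/

open MvPolynomial

/-- A polynomial `f ∈ ℂ[z_1,…,z_n]` is `K`-stable if `f(z) ≠ 0` whenever the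
vector of imaginary parts of `z` lies in the relative interior of `K`. -/
def KStable {n : ℕ} (K : Set (Fin n → ℝ)) (f : MvPolynomial (Fin n) ℂ) : Prop :=
  ∀ z : Fin n → ℂ, (fun i => (z i).im) ∈ intrinsicInterior ℝ K → eval z f ≠ 0

open Set Metric Filter Topology

theorem intrinsicInterior_mono_of_affineSpan_eq {𝕜 V P : Type*} [Ring 𝕜] [AddCommGroup V]
    [Module 𝕜 V] [TopologicalSpace P] [AddTorsor V P] {s t : Set P} (hst : s ⊆ t)
    (hspan : affineSpan 𝕜 s = affineSpan 𝕜 t) :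
    intrinsicInterior 𝕜 s ⊆ intrinsicInterior 𝕜 t := by
  unfold intrinsicInterior
  rw [hspan]
  exact image_mono (interior_mono (preimage_mono hst))

/-- The homothety with centre `y ∈ s` and ratio `a ∈ (0, 1]` maps `s` into itself without
shrinking its affine span, and it maps intrinsic interiors onto intrinsic interiors. -/
theorem Convex.combo_intrinsicInterior_self_mem_intrinsicInterior {E : Type*}
    [NormedAddCommGroup E] [NormedSpace ℝ E] [FiniteDimensional ℝ E] {s : Set E}
    (hs : Convex ℝ s) {x y : E} (hx : x ∈ intrinsicInterior ℝ s) (hy : y ∈ s) {a b : ℝ}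
    (ha : 0 < a) (hb : 0 ≤ b) (hab : a + b = 1) :
    a • x + b • y ∈ intrinsicInterior ℝ s := by
  set φ := AffineEquiv.homothetyUnitsMulHom y (Units.mk0 a ha.ne')
  have hφ (p : E) : φ p = a • (p - y) + y := rfl
  have hφ' (p : E) : φ p = a • p + b • y := by
    rw [hφ, eq_sub_of_add_eq' hab]
    module
  have himage : φ '' s ⊆ s := by
    rintro _ ⟨p, hp, rfl⟩
    rw [hφ']
    exact hs hp hy ha.le hb hab
  have hspan : affineSpan ℝ (φ '' s) = affineSpan ℝ s := by
    refine le_antisymm (affineSpan_mono ℝ himage) (affineSpan_le.mpr fun p hp => ?_)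
    have hy' : y ∈ φ '' s := ⟨y, hy, by rw [hφ, sub_self, smul_zero, zero_add]⟩
    have hline : AffineMap.lineMap y (φ p) a⁻¹ = p := by
      rw [AffineMap.lineMap_apply, hφ, vsub_eq_sub, vadd_eq_add, add_sub_cancel_right,
        smul_smul, inv_mul_cancel₀ ha.ne', one_smul, sub_add_cancel]
    exact hline ▸ AffineMap.lineMap_mem a⁻¹ (subset_affineSpan ℝ _ hy')
      (subset_affineSpan ℝ _ (mem_image_of_mem φ hp))
  refine intrinsicInterior_mono_of_affineSpan_eq himage hspan ?_
  rw [← hφ', AffineEquiv.intrinsicInterior_image]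
  exact mem_image_of_mem φ hx

theorem KStable.eval_ne_zero_of_im_mem {n : ℕ} {K : Set (Fin n → ℝ)} (hK : Convex ℝ K)
    {f : MvPolynomial (Fin n) ℂ} (hf : KStable K f) {u : Fin n → ℝ}
    (hu : u ∈ intrinsicInterior ℝ K) {ζ : Fin n → ℂ} (hζ : (fun i => (ζ i).im) ∈ K) {s : ℝ}
    (hs : s ∈ Ioc 0 1) : eval (fun i => s * (u i * Complex.I) + (1 - s) * ζ i) f ≠ 0 := by
  refine hf _ ?_
  convert hK.combo_intrinsicInterior_self_mem_intrinsicInterior hu hζ hs.1 (sub_nonneg.mpr hs.2)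
    (add_sub_cancel s 1) using 1
  ext i
  simp [mul_comm]

/-- The minimum modulus principle: were `f` zero-free, `1 / f` would be bounded by `2 / m` on
the sphere, hence at the centre, where `‖f c‖ = ‖f c - g c‖ < m / 2`. -/
theorem exists_mem_closedBall_eq_zero_of_norm_sub_lt {f g : ℂ → ℂ} {c : ℂ} {r m : ℝ}
    (hr : 0 < r) (hf : DiffContOnCl ℂ f (ball c r)) (hgc : g c = 0)
    (hgm : ∀ z ∈ sphere c r, m ≤ ‖g z‖) (hfg : ∀ z ∈ closedBall c r, ‖f z - g z‖ < m / 2) :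
    ∃ z ∈ closedBall c r, f z = 0 := by
  by_contra! hne
  have hc : c ∈ closedBall c r := mem_closedBall_self hr.le
  have hfc : ‖f c‖ < m / 2 := by simpa [hgc] using hfg c hc
  have hm : 0 < m / 2 := (norm_nonneg _).trans_lt hfc
  have hsphere : ∀ z ∈ frontier (ball c r), ‖(f z)⁻¹‖ ≤ (m / 2)⁻¹ := by
    intro z hz
    rw [frontier_ball c hr.ne'] at hz
    have hclose := hfg z (sphere_subset_closedBall hz)
    have htriangle := norm_sub_norm_le (g z) (f z)
    rw [norm_sub_rev] at htriangle
    rw [norm_inv]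
    gcongr
    linarith [hgm z hz]
  have hinv : DiffContOnCl ℂ (fun z => (f z)⁻¹) (ball c r) :=
    hf.inv fun z hz => hne z (closure_ball c hr.ne' ▸ hz)
  have hcentre := Complex.norm_le_of_forall_mem_frontier_norm_le isBounded_ball hinv hsphere
    (subset_closure (mem_ball_self hr))
  rw [norm_inv, inv_le_inv₀ (norm_pos_iff.mpr (hne c hc)) hm] at hcentre
  linarith

/-- Hurwitz's theorem for a continuous family of entire functions. -/
theorem eventually_exists_mem_closedBall_eq_zero {α : Type*} [TopologicalSpace α]
    {F : α → ℂ → ℂ} (hF : Continuous (Function.uncurry F)) (hdiff : ∀ s, Differentiable ℂ (F s))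
    {s₀ : α} {c : ℂ} {r : ℝ} (hr : 0 < r) (hc : F s₀ c = 0)
    (hsphere : ∀ z ∈ sphere c r, F s₀ z ≠ 0) :
    ∀ᶠ s in 𝓝 s₀, ∃ z ∈ closedBall c r, F s z = 0 := by
  obtain ⟨z₀, hz₀, hmin⟩ := (isCompact_sphere c r).exists_isMinOn
    (NormedSpace.sphere_nonempty.mpr hr.le) (hF.uncurry_left s₀).norm.continuousOn
  have hm : 0 < ‖F s₀ z₀‖ := norm_pos_iff.mpr (hsphere z₀ hz₀)
  obtain ⟨v, hv, hclose⟩ := (isCompact_closedBall c r).mem_uniformity_of_prod hF.continuousOn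
    (mem_univ s₀) (dist_mem_uniformity (half_pos hm))
  filter_upwards [nhdsWithin_univ s₀ ▸ hv] with s hs
  exact exists_mem_closedBall_eq_zero_of_norm_sub_lt hr (hdiff s).diffContOnCl hc
    (fun z hz => hmin hz) (fun z hz => by simpa [dist_eq_norm] using hclose s hs z hz)

theorem exists_closedBall_subset_forall_sphere_ne_zero {q : ℂ → ℂ}
    (hq : AnalyticOnNhd ℂ q univ) {c w : ℂ} (hw : q w ≠ 0) {U : Set ℂ} (hU : U ∈ 𝓝 c) :
    ∃ r > 0, closedBall c r ⊆ U ∧ ∀ z ∈ sphere c r, q z ≠ 0 := by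
  have hisolated : ∀ᶠ z in 𝓝[≠] c, q z ≠ 0 :=
    (hq c (mem_univ c)).eventually_eq_zero_or_eventually_ne_zero.resolve_left fun h =>
      hw (hq.eqOn_zero_of_preconnected_of_eventuallyEq_zero isPreconnected_univ (mem_univ c) h
        (mem_univ w))
  obtain ⟨ε, hε, hball⟩ :=
    Metric.mem_nhds_iff.mp (inter_mem hU (eventually_nhdsWithin_iff.mp hisolated))
  have hsub : closedBall c (ε / 2) ⊆ ball c ε := closedBall_subset_ball (half_lt_self hε)
  exact ⟨ε / 2, half_pos hε, fun z hz => (hball (hsub hz)).1, fun z hz =>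
    (hball (hsub (sphere_subset_closedBall hz))).2 (ne_of_mem_sphere hz (half_pos hε).ne')⟩

theorem MvPolynomial.analyticAt_eval {σ : Type*} (p : MvPolynomial σ ℂ) {x : ℂ → σ → ℂ} {t : ℂ}
    (hx : ∀ i, AnalyticAt ℂ (x · i) t) : AnalyticAt ℂ (fun t => eval (x t) p) t :=
  AnalyticAt.aeval_mvPolynomial hx p

theorem MvPolynomial.eval_aeval_affine {σ ι : Type*} [Fintype ι] (f : MvPolynomial σ ℂ)
    (a : σ → ℂ) (v : ι → σ → ℝ) (z : ι → ℂ) :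
    eval z (aeval (fun i => C (a i) + ∑ j, C ((v j i : ℝ) : ℂ) * X j) f) =
      eval (fun i => a i + ∑ j, z j * v j i) f := by
  rw [aeval_eq_bind₁]
  exact (eval₂Hom_bind₁ _ _ _ _).trans (by simp [mul_comm])

theorem MvPolynomial.exists_line_forall_sphere_eval_ne_zero {ι : Type*} [Finite ι]
    {g : MvPolynomial ι ℂ} (hg : g ≠ 0) {z₀ : ι → ℂ} (hz₀ : ∀ j, 0 < (z₀ j).im) :
    ∃ w : ι → ℂ, ∃ r > 0, (∀ t ∈ closedBall (0 : ℂ) r, ∀ j, 0 < (z₀ j + t * w j).im) ∧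
      ∀ t ∈ sphere (0 : ℂ) r, eval (fun j => z₀ j + t * w j) g ≠ 0 := by
  obtain ⟨w, hw⟩ : ∃ w, eval w g ≠ 0 := by
    by_contra! h
    exact hg (MvPolynomial.funext fun z => by simp [h z])
  have hpos : {t : ℂ | ∀ j, 0 < (z₀ j + t * (w j - z₀ j)).im} ∈ 𝓝 0 :=
    eventually_all.mpr fun j =>
      continuousAt_const.eventually_lt (by fun_prop) (by simpa using hz₀ j)
  have hline : AnalyticOnNhd ℂ (fun t => eval (fun j => z₀ j + t * (w j - z₀ j)) g) univ :=
    fun t _ => g.analyticAt_eval fun j => by fun_prop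
  exact ⟨w - z₀, exists_closedBall_subset_forall_sphere_ne_zero hline (w := 1) (by simpa using hw)
    hpos⟩

theorem substitution_stable_general {n k : ℕ} (K : Set (Fin n → ℝ))
    (hKconv : Convex ℝ K)
    (f : MvPolynomial (Fin n) ℂ) (hf : KStable K f)
    (a : Fin n → ℂ) (v : Fin k → Fin n → ℝ)
    (hsub : ∀ c : Fin k → ℝ, (∀ j, 0 ≤ c j) →
      (fun i => (a i).im + ∑ j, c j * v j i) ∈ K)
    (g : MvPolynomial (Fin k) ℂ)
    (hg : g = aeval (fun i : Fin n => C (a i) + ∑ j, C ((v j i : ℝ) : ℂ) * X j) f) :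
    Stable g ∨ g = 0 := by
  rcases eq_or_ne g 0 with hg0 | hg0
  · exact Or.inr hg0
  refine Or.inl fun z₀ hz₀ hgz₀ => ?_
  set ζ : (Fin k → ℂ) → Fin n → ℂ := fun z i => a i + ∑ j, z j * v j i
  have hgζ (z : Fin k → ℂ) : eval z g = eval (ζ z) f := hg ▸ eval_aeval_affine f a v z
  have hζK (z : Fin k → ℂ) (hz : ∀ j, 0 ≤ (z j).im) : (fun i => (ζ z i).im) ∈ K := by
    simpa [ζ, Complex.im_sum] using hsub (fun j => (z j).im) hz
  obtain ⟨u, hu⟩ := Set.Nonempty.intrinsicInterior hKconv ⟨_, hζK 0 fun _ => le_rfl⟩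
  obtain ⟨w, r, hr, hball, hsphere⟩ := exists_line_forall_sphere_eval_ne_zero hg0 hz₀
  set ℓ : ℂ → Fin k → ℂ := fun t j => z₀ j + t * w j
  set F : ℝ → ℂ → ℂ := fun s t => eval (fun i => s * (u i * Complex.I) + (1 - s) * ζ (ℓ t) i) f
  have hF : Continuous (Function.uncurry F) := (continuous_eval f).comp (by fun_prop)
  have hFdiff (s : ℝ) : Differentiable ℂ (F s) := fun t =>
    (f.analyticAt_eval fun i => by simp only [ζ, ℓ]; fun_prop).differentiableAt
  have hF00 : F 0 0 = 0 := by simpa [F, ℓ, hgζ] using hgz₀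
  have hzero := eventually_exists_mem_closedBall_eq_zero hF hFdiff hr hF00
    fun t ht => by simpa [F, hgζ] using hsphere t ht
  obtain ⟨s, ⟨t, ht, hFst⟩, hs⟩ :=
    ((hzero.filter_mono nhdsWithin_le_nhds).and (Ioo_mem_nhdsGT one_pos)).exists
  exact hf.eval_ne_zero_of_im_mem hKconv hu (hζK _ fun j => (hball t ht j).le)
    (Ioo_subset_Ioc_self hs) hFst

/-- Let `f` be `K`-stable, `a ∈ ℂ^n`, `v^(1), …, v^(k) ∈ ℝ^n`, and assume
`Im(a) + pos{v^(1),…,v^(k)} ⊆ K`. Then `g(z_1,…,z_k) = f(a + Σ_j z_j v^(j))`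
is stable or the zero polynomial. -/
theorem substitution_stable {n k : ℕ} (K : Set (Fin n → ℝ))
    (hKcl : IsClosed K) (hKconv : Convex ℝ K)
    (hKcone : ∀ c : ℝ, 0 ≤ c → ∀ x ∈ K, c • x ∈ K)
    (f : MvPolynomial (Fin n) ℂ) (hf : KStable K f)
    (a : Fin n → ℂ) (v : Fin k → Fin n → ℝ)
    (hsub : ∀ c : Fin k → ℝ, (∀ j, 0 ≤ c j) →
      (fun i => (a i).im + ∑ j, c j * v j i) ∈ K)
    (g : MvPolynomial (Fin k) ℂ)
    (hg : g = aeval (fun i : Fin n => C (a i) + ∑ j, C ((v j i : ℝ) : ℂ) * X j) f) :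
    Stable g ∨ g = 0 :=
  substitution_stable_general K hKconv f hf a v hsub g hg
end

section
/- Let K ⊆ ℝ^n be a closed convex cone and K' = K × ℝ_{≥0} ⊆ ℝ^{n+1}. Let f, g ∈ ℂ[z_1,…,z_n] with f ≢ 0 and f K-stable. Then the polynomial g(z) + y·f(z) ∈ ℂ[z_1,…,z_n,y] is K'-stable if and only if Im(g(z)/f(z)) ≥ 0 for all z ∈ ℂ^n with Im(z) in the relative interior of K. -/
open MvPolynomial

/-- The cone `K' = K × ℝ_{≥0} ⊆ ℝ^{n+1}`. -/
def coneLift {n : ℕ} (K : Set (Fin n → ℝ)) : Set (Fin (n + 1) → ℝ) :=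
  {x | (fun i : Fin n => x i.castSucc) ∈ K ∧ 0 ≤ x (Fin.last n)}

/-- The polynomial `g(z) + y·f(z) ∈ ℂ[z_1,…,z_n,y]`, where `y` is the last variable. -/
noncomputable def liftPoly {n : ℕ} (g f : MvPolynomial (Fin n) ℂ) :
    MvPolynomial (Fin (n + 1)) ℂ :=
  rename Fin.castSucc g + X (Fin.last n) * rename Fin.castSucc f

/-!
The linear isomorphism `(t, x) ↦ Fin.snoc x t` carries `[0, ∞) × K` onto `K'`, and relative
interiors commute with products and with affine isomorphisms, so the relative interior of `K'`
is `ri K × (0, ∞)`. For `Im z ∈ ri K` we have `f(z) ≠ 0`, so `g(z) + y f(z)` vanishes only at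
`y = -g(z)/f(z)`; stability in `y` says exactly that this root is not in the open upper
half-plane, i.e. `Im (g(z)/f(z)) ≥ 0`.
-/

open Set

theorem intrinsicInterior_eq_interior_of_affineSpan_eq_top {𝕜 V P : Type*} [Ring 𝕜]
    [AddCommGroup V] [Module 𝕜 V] [TopologicalSpace P] [AddTorsor V P] {s : Set P}
    (h : affineSpan 𝕜 s = ⊤) : intrinsicInterior 𝕜 s = interior s := by
  let e : affineSpan 𝕜 s ≃ₜ P :=
    (Homeomorph.setCongr (by simp [h])).trans (Homeomorph.Set.univ P)
  change e '' interior (e ⁻¹' s) = interior s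
  rw [e.image_interior, e.image_preimage]

theorem Real.intrinsicInterior_Ici (a : ℝ) : intrinsicInterior ℝ (Ici a) = Ioi a := by
  rw [intrinsicInterior_eq_interior_of_affineSpan_eq_top, interior_Ici]
  exact top_unique <| isOpen_Ioi.affineSpan_eq_top (nonempty_Ioi (a := a)) ▸
    affineSpan_mono ℝ Ioi_subset_Ici_self

def Fin.snocLinearEquiv (R M : Type*) [Semiring R] [AddCommMonoid M] [Module R M] (n : ℕ) :
    (M × (Fin n → M)) ≃ₗ[R] (Fin (n + 1) → M) :=
  { Fin.snocEquiv fun _ => M with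
    map_add' := fun p q => by
      ext i
      refine Fin.lastCases ?_ (fun i => ?_) i <;> simp
    map_smul' := fun c p => by
      ext i
      refine Fin.lastCases ?_ (fun i => ?_) i <;> simp }

theorem coneLift_eq_image {n : ℕ} (K : Set (Fin n → ℝ)) :
    coneLift K = Fin.snocLinearEquiv ℝ ℝ n '' (Ici 0 ×ˢ K) := by
  rw [LinearEquiv.image_eq_preimage_symm]
  ext x
  exact and_comm

theorem mem_intrinsicInterior_coneLift {n : ℕ} {K : Set (Fin n → ℝ)} {x : Fin (n + 1) → ℝ} :
    x ∈ intrinsicInterior ℝ (coneLift K) ↔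
      (fun i : Fin n => x i.castSucc) ∈ intrinsicInterior ℝ K ∧ 0 < x (Fin.last n) := by
  rw [coneLift_eq_image, ← LinearEquiv.coe_toAffineEquiv, AffineEquiv.intrinsicInterior_image,
    intrinsicInterior_prod_eq, Real.intrinsicInterior_Ici, LinearEquiv.coe_toAffineEquiv,
    LinearEquiv.image_eq_preimage_symm]
  exact and_comm

theorem eval_liftPoly {n : ℕ} (g f : MvPolynomial (Fin n) ℂ) (w : Fin (n + 1) → ℂ) :
    eval w (liftPoly g f) =
      eval (fun i : Fin n => w i.castSucc) g +
        w (Fin.last n) * eval (fun i : Fin n => w i.castSucc) f := by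
  simp only [liftPoly, map_add, map_mul, eval_X, eval_rename]
  rfl

theorem Complex.forall_im_pos_add_mul_ne_zero_iff {a b : ℂ} (hb : b ≠ 0) :
    (∀ y : ℂ, 0 < y.im → a + y * b ≠ 0) ↔ 0 ≤ (a / b).im := by
  have hroot (y : ℂ) : a + y * b = 0 ↔ y = -(a / b) := by
    rw [eq_neg_iff_add_eq_zero, add_div' _ _ _ hb, div_eq_zero_iff, or_iff_left hb, add_comm]
  simp only [ne_eq, hroot]
  constructor
  · intro h
    by_contra! hneg
    exact h _ (by simpa using hneg) rfl
  · rintro h y hy rfl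
    simp only [neg_im] at hy
    linarith

theorem kStable_liftPoly_iff {n : ℕ} {K : Set (Fin n → ℝ)} {f g : MvPolynomial (Fin n) ℂ} :
    KStable (coneLift K) (liftPoly g f) ↔
      ∀ z : Fin n → ℂ, (fun i => (z i).im) ∈ intrinsicInterior ℝ K →
        ∀ y : ℂ, 0 < y.im → eval z g + y * eval z f ≠ 0 := by
  simp only [KStable, mem_intrinsicInterior_coneLift, eval_liftPoly]
  constructor
  · intro h z hz y hy
    simpa using h (Fin.snoc z y)
      ⟨by simpa only [Fin.snoc_castSucc], by simpa only [Fin.snoc_last]⟩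
  · rintro h w ⟨hz, hy⟩
    exact h _ hz _ hy

theorem liftPoly_kStable_iff_general {n : ℕ} (K : Set (Fin n → ℝ))
    (f g : MvPolynomial (Fin n) ℂ) (hf : KStable K f) :
    KStable (coneLift K) (liftPoly g f) ↔
      ∀ z : Fin n → ℂ, (fun i => (z i).im) ∈ intrinsicInterior ℝ K →
        0 ≤ (eval z g / eval z f).im := by
  rw [kStable_liftPoly_iff]
  exact forall_congr' fun z => forall_congr' fun hz =>
    Complex.forall_im_pos_add_mul_ne_zero_iff (hf z hz)

/-- Let `f ≢ 0` be `K`-stable. Then `g(z) + y·f(z)` is `K × ℝ_{≥0}`-stable iff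
`Im(g(z)/f(z)) ≥ 0` for all `z` with `Im(z)` in the relative interior of `K`. -/
theorem liftPoly_kStable_iff {n : ℕ} (K : Set (Fin n → ℝ))
    (hKcl : IsClosed K) (hKconv : Convex ℝ K)
    (hKcone : ∀ c : ℝ, 0 ≤ c → ∀ x ∈ K, c • x ∈ K)
    (f g : MvPolynomial (Fin n) ℂ) (hf0 : f ≠ 0) (hf : KStable K f) :
    KStable (coneLift K) (liftPoly g f) ↔
      ∀ z : Fin n → ℂ, (fun i => (z i).im) ∈ intrinsicInterior ℝ K →
        0 ≤ (eval z g / eval z f).im :=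
  liftPoly_kStable_iff_general K f g hf
end

section
/- Let f be a psd-stable polynomial in the entries of a symmetric n×n matrix of variables Z, with total degree d = deg(f). Then there exists a polynomial g in the entries of Z such that g(M) = det(M)^d · f(−M^{-1}) for every invertible complex symmetric n×n matrix M, and g is psd-stable. -/
open MvPolynomial

/-- Variables of a symmetric `n×n` matrix of variables: pairs `(i,j)` with `i ≤ j`. -/
abbrev SymVar (n : ℕ) := {p : Fin n × Fin n // p.1 ≤ p.2}

/-- Evaluation of a polynomial in the entries of a symmetric matrix of variables
at a complex matrix `M` (the variable `z_ij` is sent to `M i j`). -/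
noncomputable def evalMat {n : ℕ} (M : Matrix (Fin n) (Fin n) ℂ)
    (f : MvPolynomial (SymVar n) ℂ) : ℂ :=
  eval (fun v : SymVar n => M v.1.1 v.1.2) f

/-- A polynomial in the entries of a symmetric `n×n` matrix of variables is
psd-stable if it does not vanish at any complex symmetric matrix whose
entrywise imaginary part is positive definite. -/
def PsdStable {n : ℕ} (f : MvPolynomial (SymVar n) ℂ) : Prop :=
  ∀ M : Matrix (Fin n) (Fin n) ℂ, M.IsSymm → (M.map Complex.im).PosDef →
    evalMat M f ≠ 0

/-!
Write `d = deg f`. Since `-M⁻¹ = det(M)⁻¹ • (-adj M)`, `det(M)^d · f(-M⁻¹)` is the degree-`d`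
homogenization of `f` evaluated at `(det M, -adj M)`, hence a polynomial in the entries of `M`.
If `M` is symmetric with `Im M ≻ 0`, then `Im (y* M y) > 0` for all `y ≠ 0`, so `M` is
invertible; for real `x ≠ 0` and `y = M⁻¹ x`, `xᵀ Im(-M⁻¹) x = -Im (conj (y* M y)) > 0`.
Thus `Im(-M⁻¹) ≻ 0`, so `f(-M⁻¹) ≠ 0` and `g(M) ≠ 0`.
-/

open Matrix

namespace MvPolynomial

variable {σ R : Type*} [CommSemiring R]

theorem IsHomogeneous.eval_smul {φ : MvPolynomial σ R} {k : ℕ} (hφ : φ.IsHomogeneous k)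
    (t : R) (x : σ → R) : eval (t • x) φ = t ^ k * eval x φ := by
  rw [eval_eq, eval_eq, Finset.mul_sum]
  refine Finset.sum_congr rfl fun α hα => ?_
  simp only [Pi.smul_apply, smul_eq_mul, mul_pow, Finset.prod_mul_distrib,
    Finset.prod_pow_eq_pow_sum, ← hφ.degree_eq_sum_deg_support hα]
  ring

noncomputable def homogenize (f : MvPolynomial σ R) : MvPolynomial (Option σ) R :=
  ∑ k ∈ Finset.range (f.totalDegree + 1),
    X none ^ (f.totalDegree - k) * rename some (homogeneousComponent k f)

theorem eval_homogenize (f : MvPolynomial σ R) (t : R) (x : σ → R) :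
    eval (fun o => o.elim t (t • x)) (homogenize f) = t ^ f.totalDegree * eval x f := by
  conv_rhs => enter [2, 2]; rw [← sum_homogeneousComponent f]
  rw [homogenize, map_sum, map_sum, Finset.mul_sum]
  refine Finset.sum_congr rfl fun k hk => ?_
  have hsome : (fun o => o.elim t (t • x)) ∘ some = t • x := rfl
  rw [eval_mul, eval_pow, eval_X, eval_rename, Option.elim_none, hsome,
    (homogeneousComponent_isHomogeneous k f).eval_smul, ← mul_assoc, ← pow_add,
    Nat.sub_add_cancel (Nat.lt_succ_iff.mp (Finset.mem_range.mp hk))]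

end MvPolynomial

namespace Matrix

variable {ι : Type*} [Fintype ι]

theorem adjugate_eq_det_smul_inv {α : Type*} [CommRing α] [DecidableEq ι] {M : Matrix ι ι α}
    (hdet : IsUnit M.det) : M.adjugate = M.det • M⁻¹ := by
  rw [inv_def, smul_smul, Ring.mul_inverse_cancel _ hdet, one_smul]

theorem im_star_dotProduct_mulVec {M : Matrix ι ι ℂ} (hM : M.IsSymm) (y : ι → ℂ) :
    (star y ⬝ᵥ M *ᵥ y).im =
      (fun i => (y i).re) ⬝ᵥ M.map Complex.im *ᵥ (fun i => (y i).re) +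
        (fun i => (y i).im) ⬝ᵥ M.map Complex.im *ᵥ (fun i => (y i).im) := by
  have hskew : ∑ i, ∑ j, (M i j).re * ((y i).re * (y j).im - (y i).im * (y j).re) = 0 := by
    simp only [mul_sub, Finset.sum_sub_distrib]
    rw [sub_eq_zero, Finset.sum_comm]
    refine Finset.sum_congr rfl fun i _ => Finset.sum_congr rfl fun j _ => ?_
    rw [hM.apply i j]
    ring
  simp only [dotProduct, mulVec, map_apply, Pi.star_apply, Complex.im_sum, Finset.mul_sum,
    ← Finset.sum_add_distrib, Complex.star_def, Complex.mul_im, Complex.mul_re, Complex.conj_re,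
    Complex.conj_im]
  rw [← sub_eq_zero, ← Finset.sum_sub_distrib, ← hskew]
  refine Finset.sum_congr rfl fun i _ => ?_
  rw [← Finset.sum_sub_distrib]
  refine Finset.sum_congr rfl fun j _ => ?_
  ring

theorem im_star_dotProduct_mulVec_pos {M : Matrix ι ι ℂ} (hM : M.IsSymm)
    (hP : (M.map Complex.im).PosDef) {y : ι → ℂ} (hy : y ≠ 0) :
    0 < (star y ⬝ᵥ M *ᵥ y).im := by
  have hre := hP.posSemidef.dotProduct_mulVec_nonneg fun i => (y i).re
  have him := hP.posSemidef.dotProduct_mulVec_nonneg fun i => (y i).im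
  rw [star_trivial] at hre him
  rw [im_star_dotProduct_mulVec hM]
  by_cases h : (fun i => (y i).re) = 0
  · have h' : (fun i => (y i).im) ≠ 0 := fun h' =>
      hy (funext fun i => Complex.ext (congrFun h i) (congrFun h' i))
    have := hP.dotProduct_mulVec_pos h'
    rw [star_trivial] at this
    linarith
  · have := hP.dotProduct_mulVec_pos h
    rw [star_trivial] at this
    linarith

theorem det_ne_zero_of_posDef_map_im {M : Matrix ι ι ℂ} [DecidableEq ι] (hM : M.IsSymm)
    (hP : (M.map Complex.im).PosDef) : M.det ≠ 0 := by
  intro h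
  obtain ⟨y, hy, hMy⟩ := exists_mulVec_eq_zero_iff.mpr h
  simpa [hMy] using im_star_dotProduct_mulVec_pos hM hP hy

theorem posDef_map_im_neg_inv {M : Matrix ι ι ℂ} [DecidableEq ι] (hM : M.IsSymm)
    (hP : (M.map Complex.im).PosDef) : ((-M⁻¹).map Complex.im).PosDef := by
  have hdet : IsUnit M.det := (det_ne_zero_of_posDef_map_im hM hP).isUnit
  refine .of_dotProduct_mulVec_pos (isHermitian_iff_isSymm.mpr (hM.inv.neg.map _))
    fun x hx => ?_
  set y := M⁻¹ *ᵥ fun i => (x i : ℂ)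
  have hMy : M *ᵥ y = fun i => (x i : ℂ) := by
    rw [mulVec_mulVec, mul_nonsing_inv _ hdet, one_mulVec]
  have hy : y ≠ 0 := fun h => hx (funext fun i => by
    simpa [h] using (congrFun hMy i).symm)
  have hxy : star (fun i => (x i : ℂ)) ⬝ᵥ y = star (star y ⬝ᵥ M *ᵥ y) := by
    rw [← hMy, ← star_dotProduct_star, star_star]
  calc 0 < (star y ⬝ᵥ M *ᵥ y).im := im_star_dotProduct_mulVec_pos hM hP hy
    _ = -(star (fun i => (x i : ℂ)) ⬝ᵥ y).im := by
      rw [hxy, Complex.star_def, Complex.conj_im, neg_neg]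
    _ = (star (fun i => (x i : ℂ)) ⬝ᵥ -M⁻¹ *ᵥ fun i => (x i : ℂ)).im := by
      rw [neg_mulVec, dotProduct_neg, Complex.neg_im]
    _ = star x ⬝ᵥ (-M⁻¹).map Complex.im *ᵥ x := by
      rw [im_star_dotProduct_mulVec hM.inv.neg, star_trivial]
      simp

end Matrix

noncomputable def genericSymmMatrix (n : ℕ) :
    Matrix (Fin n) (Fin n) (MvPolynomial (SymVar n) ℂ) :=
  Matrix.of fun i j => MvPolynomial.X ⟨(min i j, max i j), min_le_max⟩

noncomputable def inversionSubst (n : ℕ) : Option (SymVar n) → MvPolynomial (SymVar n) ℂ :=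
  fun o => o.elim (genericSymmMatrix n).det fun v => -(genericSymmMatrix n).adjugate v.1.1 v.1.2

noncomputable def psdInversion {n : ℕ} (f : MvPolynomial (SymVar n) ℂ) :
    MvPolynomial (SymVar n) ℂ :=
  MvPolynomial.bind₁ (inversionSubst n) f.homogenize

section evalMat

variable {n : ℕ} {M : Matrix (Fin n) (Fin n) ℂ}

theorem map_evalMat_genericSymmMatrix (hM : M.IsSymm) :
    (genericSymmMatrix n).map (evalMat M) = M := by
  ext i j
  simp only [genericSymmMatrix, evalMat, map_apply, of_apply, MvPolynomial.eval_X]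
  rcases le_total i j with h | h
  · rw [min_eq_left h, max_eq_right h]
  · rw [min_eq_right h, max_eq_left h, hM.apply i j]

theorem evalMat_det_genericSymmMatrix (hM : M.IsSymm) :
    evalMat M (genericSymmMatrix n).det = M.det := by
  rw [evalMat, RingHom.map_det, RingHom.mapMatrix_apply]
  exact congrArg det (map_evalMat_genericSymmMatrix hM)

theorem evalMat_adjugate_genericSymmMatrix (hM : M.IsSymm) (i j : Fin n) :
    evalMat M ((genericSymmMatrix n).adjugate i j) = M.adjugate i j := by
  calc evalMat M ((genericSymmMatrix n).adjugate i j)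
      = (MvPolynomial.eval fun v : SymVar n => M v.1.1 v.1.2).mapMatrix
          (genericSymmMatrix n).adjugate i j := rfl
    _ = ((genericSymmMatrix n).map (evalMat M)).adjugate i j := by
      rw [RingHom.map_adjugate]; rfl
    _ = M.adjugate i j := by rw [map_evalMat_genericSymmMatrix hM]

theorem evalMat_inversionSubst (hM : M.IsSymm) (hdet : IsUnit M.det) (o : Option (SymVar n)) :
    evalMat M (inversionSubst n o) = o.elim M.det (M.det • fun v => (-M⁻¹) v.1.1 v.1.2) := by
  cases o with
  | none => exact evalMat_det_genericSymmMatrix hM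
  | some v =>
    calc evalMat M (-(genericSymmMatrix n).adjugate v.1.1 v.1.2)
        = -M.adjugate v.1.1 v.1.2 := by
          rw [← evalMat_adjugate_genericSymmMatrix hM]; exact map_neg _ _
      _ = M.det * (-M⁻¹) v.1.1 v.1.2 := by rw [adjugate_eq_det_smul_inv hdet]; simp

theorem evalMat_psdInversion (f : MvPolynomial (SymVar n) ℂ) (hM : M.IsSymm)
    (hdet : IsUnit M.det) :
    evalMat M (psdInversion f) = M.det ^ f.totalDegree * evalMat (-M⁻¹) f := by
  calc evalMat M (psdInversion f)
      = MvPolynomial.eval (fun o => evalMat M (inversionSubst n o)) f.homogenize :=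
        MvPolynomial.eval₂Hom_bind₁ _ _ _ _
    _ = M.det ^ f.totalDegree * evalMat (-M⁻¹) f := by
      rw [funext (evalMat_inversionSubst hM hdet), MvPolynomial.eval_homogenize]; rfl

end evalMat

/-- Inversion: if `f` is psd-stable of total degree `d`, then there is a
polynomial `g` with `g(M) = det(M)^d · f(−M⁻¹)` for every invertible complex
symmetric matrix `M`, and `g` is psd-stable. -/
theorem inversion_psdStable {n : ℕ} (f : MvPolynomial (SymVar n) ℂ)
    (hf : PsdStable f) :
    ∃ g : MvPolynomial (SymVar n) ℂ,
      (∀ M : Matrix (Fin n) (Fin n) ℂ, M.IsSymm → IsUnit M.det →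
        evalMat M g = M.det ^ f.totalDegree * evalMat (-(M⁻¹)) f) ∧
      PsdStable g := by
  refine ⟨psdInversion f, fun M hM hdet => evalMat_psdInversion f hM hdet, fun M hM hP => ?_⟩
  have hdet : M.det ≠ 0 := det_ne_zero_of_posDef_map_im hM hP
  rw [evalMat_psdInversion f hM hdet.isUnit]
  exact mul_ne_zero (pow_ne_zero _ hdet) (hf _ hM.inv.neg (posDef_map_im_neg_inv hM hP))
end

section
/- Let A, B be real symmetric n×n matrices with B positive definite, and set C = A + iB. Then C is invertible, C^{-1} is symmetric, and the imaginary part of C^{-1} (the real symmetric matrix of entrywise imaginary parts of C^{-1}) is negative definite. -/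
/-!
Write `C = H + iP` with `H`, `P` the complexifications of `A`, `B`: `H` is Hermitian and `P`
positive definite. For complex `x`, `Im (x* C x) = Re (x* P x)`, which is positive unless
`x = 0`; hence `C` is injective. For real `x ≠ 0`, writing `x = C y` gives
`x ⬝ Im (C⁻¹) x = Im (x* C⁻¹ x) = Im (y* Cᴴ y) = -Im (y* C y) < 0`.
-/

open Matrix ComplexOrder

namespace Matrix

variable {n : Type*}

theorem IsHermitian.map_ofReal {M : Matrix n n ℝ} (hM : M.IsHermitian) :
    (M.map ((↑) : ℝ → ℂ)).IsHermitian :=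
  hM.map _ fun _ ↦ (Complex.conj_ofReal _).symm

variable [Fintype n]

theorem re_star_dotProduct_map_ofReal_mulVec (M : Matrix n n ℝ) (x : n → ℂ) :
    (star x ⬝ᵥ M.map ((↑) : ℝ → ℂ) *ᵥ x).re =
      (fun i ↦ (x i).re) ⬝ᵥ M *ᵥ (fun i ↦ (x i).re) +
        (fun i ↦ (x i).im) ⬝ᵥ M *ᵥ (fun i ↦ (x i).im) := by
  simp only [dotProduct, mulVec, Complex.re_sum, Finset.mul_sum, ← Finset.sum_add_distrib]
  refine Finset.sum_congr rfl fun i _ ↦ Finset.sum_congr rfl fun j _ ↦ ?_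
  simp only [Pi.star_apply, map_apply, Complex.star_def, Complex.mul_re, Complex.mul_im,
    Complex.conj_re, Complex.conj_im, Complex.ofReal_re, Complex.ofReal_im]
  ring

theorem PosDef.map_ofReal {M : Matrix n n ℝ} (hM : M.PosDef) :
    (M.map ((↑) : ℝ → ℂ)).PosDef := by
  have hMℂ := hM.isHermitian.map_ofReal
  refine PosDef.of_dotProduct_mulVec_pos hMℂ fun x hx ↦ ?_
  refine Complex.lt_def.mpr ⟨?_, (hMℂ.im_star_dotProduct_mulVec_self x).symm⟩
  have hpos (v : n → ℝ) (hv : v ≠ 0) : 0 < v ⬝ᵥ M *ᵥ v := by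
    simpa using hM.dotProduct_mulVec_pos hv
  have hnonneg (v : n → ℝ) : 0 ≤ v ⬝ᵥ M *ᵥ v := by
    simpa using hM.posSemidef.dotProduct_mulVec_nonneg v
  rw [Complex.zero_re, re_star_dotProduct_map_ofReal_mulVec]
  by_cases hre : (fun i ↦ (x i).re) = 0
  · have him : (fun i ↦ (x i).im) ≠ 0 := fun him ↦
      hx (funext fun i ↦ Complex.ext (congrFun hre i) (congrFun him i))
    exact add_pos_of_nonneg_of_pos (hnonneg _) (hpos _ him)
  · exact add_pos_of_pos_of_nonneg (hpos _ hre) (hnonneg _)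

theorem dotProduct_map_im_mulVec (M : Matrix n n ℂ) (x : n → ℝ) :
    x ⬝ᵥ M.map Complex.im *ᵥ x =
      (star (fun i ↦ (x i : ℂ)) ⬝ᵥ M *ᵥ fun i ↦ (x i : ℂ)).im := by
  simp only [dotProduct, mulVec, Complex.im_sum, Finset.mul_sum]
  refine Finset.sum_congr rfl fun i _ ↦ Finset.sum_congr rfl fun j _ ↦ ?_
  simp only [Pi.star_apply, map_apply, Complex.star_def, Complex.conj_ofReal, Complex.mul_im,
    Complex.ofReal_re, Complex.ofReal_im]
  ring

theorem star_dotProduct_conjTranspose_mulVec {α : Type*} [CommSemiring α] [StarRing α]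
    (M : Matrix n n α) (x : n → α) :
    star x ⬝ᵥ Mᴴ *ᵥ x = star (star x ⬝ᵥ M *ᵥ x) := by
  rw [star_dotProduct, star_mulVec, ← dotProduct_mulVec, conjTranspose_conjTranspose]

theorem im_star_dotProduct_add_I_smul_mulVec {H : Matrix n n ℂ} (hH : H.IsHermitian)
    (P : Matrix n n ℂ) (x : n → ℂ) :
    (star x ⬝ᵥ (H + Complex.I • P) *ᵥ x).im = (star x ⬝ᵥ P *ᵥ x).re := by
  have hHx : (star x ⬝ᵥ H *ᵥ x).im = 0 := hH.im_star_dotProduct_mulVec_self x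
  rw [add_mulVec, dotProduct_add, smul_mulVec, dotProduct_smul, Complex.add_im, hHx,
    smul_eq_mul, Complex.I_mul_im, zero_add]

variable [DecidableEq n]

theorem im_star_mulVec_dotProduct_nonsing_inv_mulVec {C : Matrix n n ℂ} (hC : IsUnit C)
    (y : n → ℂ) :
    (star (C *ᵥ y) ⬝ᵥ C⁻¹ *ᵥ C *ᵥ y).im = -(star y ⬝ᵥ C *ᵥ y).im := by
  rw [mulVec_mulVec, nonsing_inv_mul _ ((isUnit_iff_isUnit_det C).mp hC), one_mulVec,
    star_mulVec, ← dotProduct_mulVec, star_dotProduct_conjTranspose_mulVec, Complex.star_def,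
    Complex.conj_im]

theorem isUnit_add_I_smul_of_posDef {H P : Matrix n n ℂ} (hH : H.IsHermitian) (hP : P.PosDef) :
    IsUnit (H + Complex.I • P) := by
  rw [isUnit_iff_isUnit_det, isUnit_iff_ne_zero, Ne, ← exists_mulVec_eq_zero_iff]
  rintro ⟨x, hx, hCx⟩
  have := im_star_dotProduct_add_I_smul_mulVec hH P x
  rw [hCx, dotProduct_zero, Complex.zero_im] at this
  exact (hP.re_dotProduct_pos hx).ne this

theorem im_star_dotProduct_inv_add_I_smul_mulVec_neg {H P : Matrix n n ℂ} (hH : H.IsHermitian)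
    (hP : P.PosDef) {x : n → ℂ} (hx : x ≠ 0) :
    (star x ⬝ᵥ (H + Complex.I • P)⁻¹ *ᵥ x).im < 0 := by
  set C := H + Complex.I • P
  have hC := isUnit_add_I_smul_of_posDef hH hP
  obtain ⟨y, rfl⟩ : ∃ y, C *ᵥ y = x := (mulVec_surjective_iff_isUnit.mpr hC) x
  have hy : y ≠ 0 := by rintro rfl; exact hx (mulVec_zero C)
  rw [im_star_mulVec_dotProduct_nonsing_inv_mulVec hC, im_star_dotProduct_add_I_smul_mulVec hH,
    neg_neg_iff_pos]
  exact hP.re_dotProduct_pos hy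

end Matrix

/-- Let `A, B` be real symmetric matrices with `B` positive definite and set
`C = A + iB`. Then `C` is invertible, `C⁻¹` is symmetric, and the entrywise
imaginary part of `C⁻¹` is negative definite (its negative is positive definite). -/
theorem inv_of_posdef_im {n : ℕ} (A B : Matrix (Fin n) (Fin n) ℝ)
    (hA : A.IsSymm) (hB : B.PosDef)
    (C : Matrix (Fin n) (Fin n) ℂ)
    (hC : C = A.map (fun a => (a : ℂ)) + Complex.I • B.map (fun b => (b : ℂ))) :
    IsUnit C ∧ (C⁻¹).IsSymm ∧ (-(C⁻¹.map Complex.im)).PosDef := by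
  have hH := (isHermitian_iff_isSymm.mpr hA).map_ofReal
  have hP := hB.map_ofReal
  have hCsymm : C.IsSymm :=
    hC ▸ (hA.map _).add ((isHermitian_iff_isSymm.mp hB.isHermitian).map _ |>.smul _)
  refine ⟨hC ▸ isUnit_add_I_smul_of_posDef hH hP, hCsymm.inv, ?_⟩
  refine .of_dotProduct_mulVec_pos (isHermitian_iff_isSymm.mpr (hCsymm.inv.map _).neg)
    fun x hx ↦ ?_
  have hx' : (fun i ↦ (x i : ℂ)) ≠ 0 := fun h ↦
    hx (funext fun i ↦ by simpa using congrFun h i)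
  rw [star_trivial, neg_mulVec, dotProduct_neg, neg_pos, dotProduct_map_im_mulVec, hC]
  exact im_star_dotProduct_inv_add_I_smul_mulVec_neg hH hP hx'
end

section
/- Let f be a psd-stable polynomial in the entries of a symmetric n×n matrix of variables Z, and let W be a real symmetric positive definite n×n matrix. Then the initial form in_W(f) is psd-stable. -/
/-!
Let `c` be the largest weight `⟨W, α⟩` on the support of `f` and deform `f` to
`f_τ(Z) = e^{-τc} f(e^{τW} ∘ Z)`, with `∘` the entrywise product. The entrywise exponential
`e^{τW} = ∑ τᵐ/m! W^{∘m}` of a PSD matrix is a sum of PSD matrices (Schur), so `e^{τW} ∘ P` is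
positive definite whenever `P` is, and every `f_τ` with `τ ≥ 0` is psd-stable. As `τ → ∞` the
terms of `f_τ` of non-maximal weight die out, so `f_τ → in_W(f)`. Restricted to a complex line
through a point `M` of the domain, the `f_τ` are polynomials of bounded degree with no zero in a
fixed disc around `M`; for such a polynomial `|p(s)| ≤ 2^{deg p} |p(0)|` on the disc, and this
bound survives the limit. Hence a zero of `in_W(f)` at `M` forces `in_W(f)` to vanish on every
line through `M`, contradicting `in_W(f) ≠ 0` (it keeps the top-weight coefficients of `f`).
-/

open MvPolynomial

/-- The Frobenius pairing `⟨W, α⟩_F` of a real symmetric matrix `W` with the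
symmetric exponent matrix of a monomial recorded by `m : SymVar n →₀ ℕ` (the
exponent of `z_ij` contributes `W_ij`-weight per unit, symmetrically). -/
noncomputable def frobWeight {n : ℕ} (W : Matrix (Fin n) (Fin n) ℝ)
    (m : SymVar n →₀ ℕ) : ℝ :=
  ∑ v : SymVar n, W v.1.1 v.1.2 * (m v : ℝ)

open scoped Classical in
/-- The initial form of `f` with respect to a real symmetric matrix `W`: the sum
of the terms of `f` whose exponent matrices maximize the Frobenius pairing with
`W` over the support of `f`. -/
noncomputable def initialFormMat {n : ℕ} (W : Matrix (Fin n) (Fin n) ℝ)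
    (f : MvPolynomial (SymVar n) ℂ) : MvPolynomial (SymVar n) ℂ :=
  ∑ α ∈ f.support.filter
      (fun α => ∀ β ∈ f.support, frobWeight W β ≤ frobWeight W α),
    monomial α (coeff α f)

open Filter Topology
open scoped Polynomial Nat Matrix

namespace Polynomial

theorem norm_eval_le_two_pow_mul_norm_eval_zero (p : ℂ[X]) {ε : ℝ}
    (hroot : ∀ z ∈ Metric.ball (0 : ℂ) ε, p.eval z ≠ 0) {s : ℂ} (hs : s ∈ Metric.ball 0 ε) :
    ‖p.eval s‖ ≤ 2 ^ p.natDegree * ‖p.eval 0‖ := by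
  rcases eq_or_ne p 0 with rfl | hp
  · simp
  have hsplit := IsAlgClosed.splits p
  have hfar : ∀ r ∈ p.roots, ‖s - r‖ ≤ 2 * ‖0 - r‖ := by
    intro r hr
    have hεr : ε ≤ ‖r‖ := by
      by_contra! h
      exact hroot r (by simpa using h) ((mem_roots hp).mp hr)
    rw [zero_sub, norm_neg]
    have := norm_sub_le s r
    rw [mem_ball_zero_iff] at hs
    linarith
  have hnorm : ∀ m : Multiset ℂ, ‖m.prod‖ = (m.map (‖·‖)).prod :=
    map_multiset_prod (normHom : ℂ →*₀ ℝ)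
  rw [hsplit.eval_eq_prod_roots, hsplit.eval_eq_prod_roots, norm_mul, norm_mul, hnorm, hnorm,
    Multiset.map_map, Multiset.map_map]
  calc ‖p.leadingCoeff‖ * (p.roots.map fun r => ‖s - r‖).prod
      ≤ ‖p.leadingCoeff‖ * (p.roots.map fun r => 2 * ‖0 - r‖).prod := by
        gcongr
        exact Multiset.prod_map_le_prod_map₀ _ _ (fun _ _ => norm_nonneg _) hfar
    _ = 2 ^ p.roots.card * (‖p.leadingCoeff‖ * (p.roots.map fun r => ‖0 - r‖).prod) := by
        rw [Multiset.prod_map_mul, Multiset.map_const', Multiset.prod_replicate]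
        ring
    _ ≤ 2 ^ p.natDegree * (‖p.leadingCoeff‖ * (p.roots.map fun r => ‖0 - r‖).prod) := by
        have : 0 ≤ (p.roots.map fun r => ‖0 - r‖).prod :=
          Multiset.prod_nonneg fun _ hx => by
            obtain ⟨r, -, rfl⟩ := Multiset.mem_map.mp hx; exact norm_nonneg _
        gcongr
        exacts [one_le_two, card_roots' p]
    _ = _ := by simp

theorem eq_zero_of_tendsto_of_eval_ne_zero {α : Type*} {l : Filter α} [l.NeBot]
    {P : α → ℂ[X]} {h : ℂ[X]} {D : ℕ} (hdeg : ∀ a, (P a).natDegree ≤ D) {ε : ℝ} (hε : 0 < ε)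
    (hroot : ∀ᶠ a in l, ∀ z ∈ Metric.ball (0 : ℂ) ε, (P a).eval z ≠ 0)
    (hlim : ∀ z, Tendsto (fun a => (P a).eval z) l (𝓝 (h.eval z))) (h0 : h.eval 0 = 0) :
    h = 0 := by
  have hball : ∀ s ∈ Metric.ball (0 : ℂ) ε, h.eval s = 0 := by
    intro s hs
    have hbound : ‖h.eval s‖ ≤ 2 ^ D * ‖h.eval 0‖ := by
      refine le_of_tendsto_of_tendsto (hlim s).norm (((hlim 0).norm).const_mul _) ?_
      filter_upwards [hroot] with a ha
      calc ‖(P a).eval s‖ ≤ 2 ^ (P a).natDegree * ‖(P a).eval 0‖ :=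
            norm_eval_le_two_pow_mul_norm_eval_zero _ ha hs
        _ ≤ 2 ^ D * ‖(P a).eval 0‖ := by gcongr; exacts [one_le_two, hdeg a]
    simpa [h0] using hbound
  exact eq_zero_of_infinite_isRoot h
    ((infinite_of_mem_nhds 0 (Metric.ball_mem_nhds 0 hε)).mono hball)

end Polynomial

namespace Matrix

variable {ι : Type*} [Fintype ι]

theorem PosDef.eventually_posDef {P : Matrix ι ι ℝ} (hP : P.PosDef) :
    ∀ᶠ A in 𝓝 P, A.IsHermitian → A.PosDef := by
  have hK : IsCompact (Metric.sphere (0 : ι → ℝ) 1) := isCompact_sphere 0 1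
  have hcont : Continuous fun p : Matrix ι ι ℝ × (ι → ℝ) => p.2 ⬝ᵥ (p.1 *ᵥ p.2) := by
    fun_prop
  have hpos : ∀ᶠ A in 𝓝 P, ∀ u ∈ Metric.sphere (0 : ι → ℝ) 1, 0 < u ⬝ᵥ (A *ᵥ u) := by
    refine hK.eventually_forall_of_forall_eventually fun u hu => ?_
    have hu0 : u ≠ 0 := ne_zero_of_mem_unit_sphere ⟨u, hu⟩
    exact hcont.continuousAt.eventually
      (lt_mem_nhds (by simpa using hP.dotProduct_mulVec_pos hu0))
  filter_upwards [hpos] with A hA hAh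
  refine PosDef.of_dotProduct_mulVec_pos hAh fun x hx => ?_
  have hnx : 0 < ‖x‖ := norm_pos_iff.mpr hx
  have hu : ‖x‖⁻¹ • x ∈ Metric.sphere (0 : ι → ℝ) 1 := by
    simp [norm_smul, hnx.ne']
  have := hA _ hu
  simp only [mulVec_smul, smul_dotProduct, dotProduct_smul, smul_eq_mul] at this
  have hinv : 0 ≤ ‖x‖⁻¹ := by positivity
  simpa using pos_of_mul_pos_right (pos_of_mul_pos_right this hinv) hinv

theorem PosSemidef.map_pow {W : Matrix ι ι ℝ} (hW : W.PosSemidef) (m : ℕ) :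
    (W.map (· ^ m)).PosSemidef := by
  induction m with
  | zero =>
    have hones : W.map (· ^ 0) = vecMulVec (fun _ => 1) (star fun _ => 1) := by
      ext; simp [vecMulVec_apply]
    exact hones ▸ posSemidef_vecMulVec_self_star _
  | succ m ih =>
    have hsucc : W.map (· ^ (m + 1)) = W.map (· ^ m) ⊙ W := by
      ext; simp [pow_succ]
    exact hsucc ▸ ih.hadamard hW

theorem PosDef.hadamard_map_exp {W P : Matrix ι ι ℝ} (hW : W.PosSemidef)
    (hP : P.PosDef) {τ : ℝ} (hτ : 0 ≤ τ) :
    (W.map (fun w => Real.exp (τ * w)) ⊙ P).PosDef := by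
  refine PosDef.of_dotProduct_mulVec_pos
    ((hW.isHermitian.map (fun w => Real.exp (τ * w)) fun _ => rfl).hadamard hP.isHermitian)
    fun x hx => ?_
  -- Expand `exp` entrywise: the `m`-th term is `τ^m/m! • (W^{∘m} ⊙ P)`, PSD by Schur.
  have hentry : ∀ i j, HasSum (fun m : ℕ => τ ^ m / m ! * (W i j ^ m * P i j))
      (Real.exp (τ * W i j) * P i j) := fun i j => by
    have := (NormedSpace.expSeries_div_hasSum_exp (τ * W i j)).mul_right (P i j)
    rw [← Real.exp_eq_exp_ℝ] at this
    have hterm : (fun m : ℕ => τ ^ m / m ! * (W i j ^ m * P i j))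
        = fun m : ℕ => (τ * W i j) ^ m / m ! * P i j := funext fun m => by ring
    exact hterm ▸ this
  have hmat : HasSum (fun m : ℕ => (τ ^ m / m ! : ℝ) • (W.map (· ^ m) ⊙ P))
      (W.map (fun w => Real.exp (τ * w)) ⊙ P) :=
    Pi.hasSum.mpr fun i => Pi.hasSum.mpr fun j => hentry i j
  let q : Matrix ι ι ℝ →+ ℝ :=
    AddMonoidHom.mk' (fun A => x ⬝ᵥ (A *ᵥ x)) fun A B => by simp [add_mulVec]
  have hq : HasSum (fun m : ℕ => τ ^ m / m ! * (x ⬝ᵥ ((W.map (· ^ m) ⊙ P) *ᵥ x)))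
      (x ⬝ᵥ ((W.map (fun w => Real.exp (τ * w)) ⊙ P) *ᵥ x)) := by
    simpa [q, Function.comp_def, smul_mulVec] using hmat.map q
      (show Continuous fun A : Matrix ι ι ℝ => x ⬝ᵥ (A *ᵥ x) by fun_prop)
  have hterm : ∀ m : ℕ, 0 ≤ τ ^ m / m ! * (x ⬝ᵥ ((W.map (· ^ m) ⊙ P) *ᵥ x)) := fun m =>
    mul_nonneg (by positivity) (((hW.map_pow m).hadamard hP.posSemidef).dotProduct_mulVec_nonneg x)
  have h0 : W.map (· ^ 0) ⊙ P = P := by ext; simp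
  calc 0 < x ⬝ᵥ (P *ᵥ x) := by simpa using hP.dotProduct_mulVec_pos hx
    _ = τ ^ 0 / (0 ! : ℕ) * (x ⬝ᵥ ((W.map (· ^ 0) ⊙ P) *ᵥ x)) := by
        rw [h0]; simp
    _ ≤ _ := le_hasSum hq 0 fun m _ => hterm m

end Matrix

namespace MvPolynomial

variable {σ : Type*}

theorem natDegree_aeval_le_totalDegree {R : Type*} [CommSemiring R] {q : σ → R[X]}
    (hq : ∀ v, (q v).natDegree ≤ 1) (g : MvPolynomial σ R) :
    (aeval q g).natDegree ≤ g.totalDegree := by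
  rw [aeval_eq_eval₂Hom, coe_eval₂Hom, eval₂_eq]
  refine Polynomial.natDegree_sum_le_of_forall_le _ _ fun d hd => ?_
  calc (algebraMap R R[X] (coeff d g) * ∏ i ∈ d.support, q i ^ d i).natDegree
      ≤ ∑ i ∈ d.support, d i * 1 := by
        refine Polynomial.natDegree_C_mul_le _ _ |>.trans <|
          Polynomial.natDegree_prod_le _ _ |>.trans ?_
        exact Finset.sum_le_sum fun i _ =>
          Polynomial.natDegree_pow_le.trans (Nat.mul_le_mul_left _ (hq i))
    _ ≤ g.totalDegree := by simpa [Finsupp.sum] using le_totalDegree hd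

theorem eval_aeval_line (g : MvPolynomial σ ℂ) (a b : σ → ℂ) (s : ℂ) :
    (aeval (fun v => Polynomial.C (b v) * Polynomial.X + Polynomial.C (a v)) g).eval s =
      eval (fun v => b v * s + a v) g := by
  rw [← coe_aeval_eq_eval, ← Polynomial.coe_aeval_eq_eval, ← AlgHom.comp_apply, comp_aeval]
  simp

theorem eq_zero_of_tendsto_of_eval_ne_zero {α : Type*} {l : Filter α} [l.NeBot]
    {F : α → MvPolynomial σ ℂ} {G : MvPolynomial σ ℂ} {D : ℕ} (hdeg : ∀ a, (F a).totalDegree ≤ D)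
    (hlim : ∀ y, Tendsto (fun a => eval y (F a)) l (𝓝 (eval y G))) {U : Set (σ → ℂ)}
    (hU : IsOpen U) (hne : ∀ᶠ a in l, ∀ y ∈ U, eval y (F a) ≠ 0) {y₀ : σ → ℂ} (hy₀ : y₀ ∈ U)
    (hG : eval y₀ G = 0) : G = 0 := by
  by_contra hG0
  obtain ⟨x, hx⟩ : ∃ x, eval x G ≠ 0 := by
    by_contra! h
    exact hG0 (funext fun x => by simp [h x])
  -- restrict everything to the complex line through `y₀` and `x`
  have hline : Continuous fun s : ℂ => fun v => (x v - y₀ v) * s + y₀ v := by fun_prop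
  obtain ⟨ε, hε, hball⟩ := Metric.isOpen_iff.mp (hU.preimage hline) 0 (by simpa using hy₀)
  let ℓ : σ → ℂ[X] := fun v => Polynomial.C (x v - y₀ v) * Polynomial.X + Polynomial.C (y₀ v)
  have hev : ∀ g s, (aeval ℓ g).eval s = eval (fun v => (x v - y₀ v) * s + y₀ v) g :=
    fun g s => eval_aeval_line g _ _ s
  have hℓ : aeval ℓ G = 0 := by
    refine Polynomial.eq_zero_of_tendsto_of_eval_ne_zero (P := fun a => aeval ℓ (F a)) (D := D)
      (fun a => (natDegree_aeval_le_totalDegree (fun _ => Polynomial.natDegree_linear_le) _).trans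
        (hdeg a))
      hε ?_ (fun z => by simpa only [hev] using hlim _) (by simpa [hev])
    filter_upwards [hne] with a ha z hz
    rw [hev]
    exact ha _ (hball hz)
  apply hx
  simpa [hev] using congrArg (Polynomial.eval 1) hℓ

end MvPolynomial

theorem tendsto_sum_exp_mul_sub {ι : Type*} (s : Finset ι) (ω : ι → ℝ) {c : ℝ}
    (hc : ∀ i ∈ s, ω i ≤ c) (a : ι → ℂ) :
    Tendsto (fun τ : ℝ => ∑ i ∈ s, (Real.exp (τ * (ω i - c)) : ℂ) * a i) atTop
      (𝓝 (∑ i ∈ s with ω i = c, a i)) := by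
  rw [Finset.sum_filter]
  refine tendsto_finsetSum _ fun i hi => ?_
  split_ifs with h
  · simp [h]
  · have hneg : ω i - c < 0 := sub_neg.mpr ((hc i hi).lt_of_ne h)
    have hexp := Real.tendsto_exp_atBot.comp (tendsto_id.atTop_mul_const_of_neg hneg)
    simpa using ((Complex.continuous_ofReal.tendsto 0).comp hexp).mul_const (a i)

variable {n : ℕ}

noncomputable def initialDeformation (W : Matrix (Fin n) (Fin n) ℝ) (c τ : ℝ)
    (f : MvPolynomial (SymVar n) ℂ) : MvPolynomial (SymVar n) ℂ :=
  ∑ α ∈ f.support, monomial α ((Real.exp (τ * (frobWeight W α - c)) : ℂ) * coeff α f)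

theorem totalDegree_initialDeformation_le (W : Matrix (Fin n) (Fin n) ℝ) (c τ : ℝ)
    (f : MvPolynomial (SymVar n) ℂ) :
    (initialDeformation W c τ f).totalDegree ≤ f.totalDegree :=
  (totalDegree_finsetSum _ _).trans <| Finset.sup_le fun _ hα =>
    (totalDegree_monomial_le _ _).trans (le_totalDegree hα)

theorem eval_initialDeformation (W : Matrix (Fin n) (Fin n) ℝ) (c τ : ℝ)
    (f : MvPolynomial (SymVar n) ℂ) (y : SymVar n → ℂ) :
    eval y (initialDeformation W c τ f) =
      Real.exp (-(τ * c)) * eval (fun v => Real.exp (τ * W v.1.1 v.1.2) * y v) f := by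
  rw [initialDeformation, map_sum, eval_eq', Finset.mul_sum]
  refine Finset.sum_congr rfl fun α _ => ?_
  have hweight : ∏ v, (Real.exp (τ * W v.1.1 v.1.2) : ℂ) ^ α v =
      Real.exp (τ * frobWeight W α) := by
    simp only [← Complex.ofReal_pow, ← Real.exp_nat_mul, ← Complex.ofReal_prod, ← Real.exp_sum,
      frobWeight, Finset.mul_sum]
    congr 2
    exact Finset.sum_congr rfl fun v _ => by ring
  rw [eval_monomial, Finsupp.prod_fintype _ _ fun _ => pow_zero _]
  simp only [mul_pow, Finset.prod_mul_distrib, hweight]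
  rw [show τ * (frobWeight W α - c) = -(τ * c) + τ * frobWeight W α by ring, Real.exp_add]
  push_cast
  ring

theorem tendsto_eval_initialDeformation (W : Matrix (Fin n) (Fin n) ℝ)
    (f : MvPolynomial (SymVar n) ℂ) {α₀ : SymVar n →₀ ℕ} (hα₀ : α₀ ∈ f.support)
    (hmax : ∀ β ∈ f.support, frobWeight W β ≤ frobWeight W α₀) (y : SymVar n → ℂ) :
    Tendsto (fun τ => eval y (initialDeformation W (frobWeight W α₀) τ f)) atTop
      (𝓝 (eval y (initialFormMat W f))) := by
  simp only [initialDeformation, initialFormMat, map_sum, eval_monomial, mul_assoc]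
  convert tendsto_sum_exp_mul_sub f.support (frobWeight W) hmax _ using 4 with α hα
  exact ⟨fun h => le_antisymm (hmax α hα) (h α₀ hα₀), fun h β hβ => h ▸ hmax β hβ⟩

def symMat (y : SymVar n → ℂ) : Matrix (Fin n) (Fin n) ℂ :=
  Matrix.of fun i j => if h : i ≤ j then y ⟨(i, j), h⟩ else y ⟨(j, i), le_of_not_ge h⟩

theorem symMat_isSymm (y : SymVar n → ℂ) : (symMat y).IsSymm := by
  refine Matrix.IsSymm.ext fun i j => ?_
  rcases lt_trichotomy i j with h | rfl | h
  · simp [symMat, h.le, not_le.mpr h]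
  · rfl
  · simp [symMat, h.le, not_le.mpr h]

theorem symMat_apply (y : SymVar n → ℂ) (v : SymVar n) : symMat y v.1.1 v.1.2 = y v := by
  simp [symMat, v.2]

theorem continuous_symMat : Continuous (symMat (n := n)) :=
  continuous_pi fun i => continuous_pi fun j => by
    simp only [symMat, Matrix.of_apply]
    split_ifs <;> exact continuous_apply _

theorem symMat_eq_self {M : Matrix (Fin n) (Fin n) ℂ} (hM : M.IsSymm) :
    symMat (fun v => M v.1.1 v.1.2) = M := by
  ext i j
  by_cases h : i ≤ j
  · simp [symMat, h]
  · simpa [symMat, h] using hM.apply i j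

theorem isOpen_setOf_posDef_symMat :
    IsOpen {y : SymVar n → ℂ | ((symMat y).map Complex.im).PosDef} := by
  refine isOpen_iff_mem_nhds.mpr fun y hy => ?_
  have hcont : Continuous fun y : SymVar n → ℂ => (symMat y).map Complex.im :=
    continuous_symMat.matrix_map Complex.continuous_im
  filter_upwards [hcont.continuousAt.eventually hy.eventually_posDef] with z hz
  exact hz (Matrix.isHermitian_iff_isSymm.mpr ((symMat_isSymm z).map _))

theorem PsdStable.ne_zero {f : MvPolynomial (SymVar n) ℂ} (hf : PsdStable f) : f ≠ 0 := by
  rintro rfl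
  refine hf (Matrix.diagonal fun _ => Complex.I) (Matrix.isSymm_diagonal _) ?_ (by simp [evalMat])
  simpa [Matrix.diagonal_map] using Matrix.PosDef.one

theorem PsdStable.evalMat_hadamard_exp_ne_zero {f : MvPolynomial (SymVar n) ℂ}
    (hf : PsdStable f) {W : Matrix (Fin n) (Fin n) ℝ} (hW : W.PosSemidef) {τ : ℝ} (hτ : 0 ≤ τ)
    {A : Matrix (Fin n) (Fin n) ℂ} (hA : A.IsSymm) (hAim : (A.map Complex.im).PosDef) :
    evalMat (W.map (fun w => (Real.exp (τ * w) : ℂ)) ⊙ A) f ≠ 0 := by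
  refine hf _ (Matrix.IsSymm.ext fun i j => ?_) ?_
  · simp [hA.apply i j, (Matrix.isHermitian_iff_isSymm.mp hW.isHermitian).apply i j]
  · have him : (W.map (fun w => (Real.exp (τ * w) : ℂ)) ⊙ A).map Complex.im =
        W.map (fun w => Real.exp (τ * w)) ⊙ A.map Complex.im := by
      ext; simp only [Matrix.map_apply, Matrix.hadamard_apply, Complex.im_ofReal_mul]
    exact him ▸ hAim.hadamard_map_exp hW hτ

theorem coeff_initialFormMat_of_maximal (W : Matrix (Fin n) (Fin n) ℝ)
    {f : MvPolynomial (SymVar n) ℂ} {α₀ : SymVar n →₀ ℕ} (hα₀ : α₀ ∈ f.support)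
    (hmax : ∀ β ∈ f.support, frobWeight W β ≤ frobWeight W α₀) :
    coeff α₀ (initialFormMat W f) = coeff α₀ f := by
  rw [initialFormMat, coeff_sum, Finset.sum_eq_single α₀]
  · simp
  · intro β _ hne
    simp [coeff_monomial, hne]
  · intro h
    exact absurd (Finset.mem_filter.mpr ⟨hα₀, hmax⟩) h

/-- If `f` is psd-stable and `W` is positive definite, then the initial form
`in_W(f)` is psd-stable. -/
theorem initialFormMat_psdStable {n : ℕ} (f : MvPolynomial (SymVar n) ℂ)
    (hf : PsdStable f) (W : Matrix (Fin n) (Fin n) ℝ) (hW : W.PosDef) :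
    PsdStable (initialFormMat W f) := by
  intro M hM hMim hzero
  obtain ⟨α₀, hα₀, hmax⟩ := f.support.exists_max_image (frobWeight W)
    (Finset.nonempty_iff_ne_empty.mpr (support_eq_empty.not.mpr hf.ne_zero))
  have hne : ∀ᶠ τ in atTop, ∀ y ∈ {y : SymVar n → ℂ | ((symMat y).map Complex.im).PosDef},
      eval y (initialDeformation W (frobWeight W α₀) τ f) ≠ 0 := by
    filter_upwards [eventually_ge_atTop 0] with τ hτ y hy
    rw [eval_initialDeformation]
    refine mul_ne_zero (Complex.ofReal_ne_zero.mpr (Real.exp_ne_zero _)) ?_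
    simpa [evalMat, symMat_apply] using
      hf.evalMat_hadamard_exp_ne_zero hW.posSemidef hτ (symMat_isSymm y) hy
  have hin : initialFormMat W f = 0 :=
    MvPolynomial.eq_zero_of_tendsto_of_eval_ne_zero (totalDegree_initialDeformation_le W _ · f)
      (tendsto_eval_initialDeformation W f hα₀ hmax) isOpen_setOf_posDef_symMat hne
      (y₀ := fun v => M v.1.1 v.1.2) (by simpa [symMat_eq_self hM] using hMim) hzero
  have hcoeff := coeff_initialFormMat_of_maximal W hα₀ hmax
  rw [hin, coeff_zero] at hcoeff
  exact mem_support_iff.mp hα₀ hcoeff.symm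
end

section
/- Let f be a psd-stable polynomial in the entries of a symmetric n×n matrix of variables Z. If an off-diagonal variable z_ij (i < j) occurs in f (i.e., some monomial of f has positive exponent on z_ij), then the diagonal variables z_ii and z_jj also occur in f. -/
open MvPolynomial

/-! Suppose `z_kk` does not occur in `f` but some `z_kb` does. Grade `f` by giving the variables
of row `k` weight one and all others weight zero; some component of positive weight is nonzero,
so it is nonzero at a point `x` whose off-diagonal entries are real and whose diagonal entries
have imaginary part one (polynomials are determined by their values on such boxes). Multiplying
row `k` of `x` by `t` turns `f` into a nonconstant polynomial in `t`, which has a root `τ`.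
Since `z_kk` does not occur, the `(k, k)` entry may then be replaced by `i R` without changing
the value of `f`. The imaginary part of the resulting matrix is the identity off row and column
`k`, so for large `R` it is diagonally dominant after rescaling row and column `k`, hence
positive definite: a contradiction with psd-stability. -/

namespace MvPolynomial

section Weighted

variable {σ R : Type*} [CommSemiring R]

theorem aeval_C_mul_X_pow_monomial (w : σ → ℕ) (x : σ → R) (α : σ →₀ ℕ) (a : R) :
    aeval (fun v => Polynomial.C (x v) * Polynomial.X ^ w v) (monomial α a) =
      Polynomial.C (eval x (monomial α a)) * Polynomial.X ^ Finsupp.weight w α := by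
  simp only [aeval_monomial, eval_monomial, Finsupp.weight_apply, Finsupp.prod, Finsupp.sum,
    mul_pow, Finset.prod_mul_distrib, ← pow_mul, Finset.prod_pow_eq_pow_sum, map_mul, map_prod,
    map_pow, Polynomial.algebraMap_eq, smul_eq_mul, mul_assoc, mul_comm (w _)]

theorem coeff_aeval_C_mul_X_pow (w : σ → ℕ) (x : σ → R) (d : ℕ) (f : MvPolynomial σ R) :
    (aeval (fun v => Polynomial.C (x v) * Polynomial.X ^ w v) f).coeff d =
      eval x (weightedHomogeneousComponent w d f) := by
  classical
  induction f using MvPolynomial.induction_on' with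
  | monomial α a =>
    rw [aeval_C_mul_X_pow_monomial, Polynomial.coeff_C_mul_X_pow]
    have hα := isWeightedHomogeneous_monomial w α a rfl
    by_cases h : d = Finsupp.weight w α
    · rw [if_pos h, h, hα.weightedHomogeneousComponent_same]
    · rw [if_neg h, hα.weightedHomogeneousComponent_ne _ h, map_zero]
  | add p q hp hq => simp [hp, hq]

theorem eval_aeval_C_mul_X_pow (w : σ → ℕ) (x : σ → R) (t : R) (f : MvPolynomial σ R) :
    (aeval (fun v => Polynomial.C (x v) * Polynomial.X ^ w v) f).eval t =
      eval (fun v => x v * t ^ w v) f := by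
  induction f using MvPolynomial.induction_on with
  | C a => simp
  | add p q hp hq => simp [hp, hq]
  | mul_X p v hp => simp [hp]

/-- `t ↦ f (fun v => x v * t ^ w v)` is a polynomial whose `t ^ d`-coefficient is the weight-`d`
component of `f` at `x`, so it is nonconstant and has a root. -/
theorem exists_eval_mul_pow_eq_zero {K : Type*} [Field K] [IsAlgClosed K]
    (f : MvPolynomial σ K) (w : σ → ℕ) (x : σ → K) {d : ℕ} (hd : d ≠ 0)
    (hx : eval x (weightedHomogeneousComponent w d f) ≠ 0) :
    ∃ t, eval (fun v => x v * t ^ w v) f = 0 := by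
  set P := aeval (fun v => Polynomial.C (x v) * Polynomial.X ^ w v) f
  have hPd : P.coeff d ≠ 0 := by rwa [coeff_aeval_C_mul_X_pow]
  have hP : P.degree ≠ 0 := by
    refine (Polynomial.natDegree_pos_iff_degree_pos.mp ?_).ne'
    exact Nat.pos_of_ne_zero hd |>.trans_le (Polynomial.le_natDegree_of_ne_zero hPd)
  obtain ⟨t, ht⟩ := IsAlgClosed.exists_root P hP
  exact ⟨t, by rw [← eval_aeval_C_mul_X_pow]; exact ht⟩

end Weighted

theorem exists_mem_pi_eval_ne_zero {σ R : Type*} [CommRing R] [IsDomain R]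
    {g : MvPolynomial σ R} (hg : g ≠ 0) (s : σ → Set R) (hs : ∀ i, (s i).Infinite) :
    ∃ x ∈ Set.univ.pi s, eval x g ≠ 0 := by
  by_contra! h
  exact hg (funext_set s hs fun x hx => by simpa using h x hx)

theorem eval_update_of_notMem_vars {σ R : Type*} [CommSemiring R] [DecidableEq σ]
    {f : MvPolynomial σ R} {i : σ} (hi : i ∉ f.vars) (x : σ → R) (r : R) :
    eval (Function.update x i r) f = eval x f :=
  eval₂Hom_congr' rfl (fun _ hj _ => Function.update_of_ne (ne_of_mem_of_not_mem hj hi) _ _) rfl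

end MvPolynomial

namespace Matrix

variable {ι : Type*} [Fintype ι] [DecidableEq ι]

theorem posDef_of_sum_abs_lt_diag {A : Matrix ι ι ℝ} (hA : A.IsSymm)
    (h : ∀ i, ∑ j ∈ Finset.univ.erase i, |A i j| < A i i) : A.PosDef := by
  have hH : A.IsHermitian := isHermitian_iff_isSymm.mpr hA
  refine hH.posDef_iff_eigenvalues_pos.mpr fun i => ?_
  have hμ : Module.End.HasEigenvalue (toLin' A) (hH.eigenvalues i) := by
    rw [Module.End.hasEigenvalue_iff_mem_spectrum, spectrum_toLin']
    exact hH.eigenvalues_mem_spectrum_real i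
  obtain ⟨k, hk⟩ := eigenvalue_mem_ball hμ
  rw [Metric.mem_closedBall, Real.dist_eq] at hk
  simp only [Real.norm_eq_abs] at hk
  linarith [(abs_le.mp hk).1, h k]

theorem posDef_of_sum_abs_mul_lt_diag_mul {A : Matrix ι ι ℝ} (hA : A.IsSymm) (p : ι → ℝ)
    (hp : ∀ i, 0 < p i) (h : ∀ i, ∑ j ∈ Finset.univ.erase i, |A i j| * p j < A i i * p i) :
    A.PosDef := by
  have hDAD : (diagonal p * A * diagonal p).PosDef := by
    refine posDef_of_sum_abs_lt_diag ?_ fun i => ?_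
    · simp [IsSymm, transpose_mul, hA.eq, mul_assoc]
    · simp only [mul_diagonal, diagonal_mul, abs_mul, abs_of_pos (hp _)]
      calc ∑ j ∈ Finset.univ.erase i, p i * |A i j| * p j
          = p i * ∑ j ∈ Finset.univ.erase i, |A i j| * p j := by
            rw [Finset.mul_sum]; exact Finset.sum_congr rfl fun j _ => by ring
        _ < p i * (A i i * p i) := mul_lt_mul_of_pos_left (h i) (hp i)
        _ = p i * A i i * p i := by ring
  have hA_eq : A = (diagonal p⁻¹)ᴴ * (diagonal p * A * diagonal p) * diagonal p⁻¹ := by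
    ext i j
    have hpi := (hp i).ne'
    have hpj := (hp j).ne'
    simp only [conjTranspose_eq_transpose_of_trivial, diagonal_transpose, mul_diagonal,
      diagonal_mul, Pi.inv_apply]
    field_simp
  rw [hA_eq]
  refine hDAD.conjTranspose_mul_mul_same fun x y hxy => funext fun i => ?_
  have hxyi := congrFun hxy i
  simp only [mulVec_diagonal, Pi.inv_apply] at hxyi
  exact mul_left_cancel₀ (inv_ne_zero (hp i).ne') hxyi

theorem posDef_of_one_bordered {A : Matrix ι ι ℝ} (hA : A.IsSymm) (k : ι)
    (hblock : ∀ a b, a ≠ k → b ≠ k → A a b = (1 : Matrix ι ι ℝ) a b) {U : ℝ} (hU₀ : 0 ≤ U)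
    (hU : ∀ b, b ≠ k → |A k b| ≤ U) (hkk : Fintype.card ι * U * (U + 1) < A k k) :
    A.PosDef := by
  have hU₁ : 0 < U + 1 := by linarith
  refine posDef_of_sum_abs_mul_lt_diag_mul hA (fun a => if a = k then (U + 1)⁻¹ else 1)
    (fun a => by split_ifs <;> positivity) fun a => ?_
  by_cases hak : a = k
  · subst hak
    calc ∑ b ∈ Finset.univ.erase a, |A a b| * (if b = a then (U + 1)⁻¹ else 1)
        = ∑ b ∈ Finset.univ.erase a, |A a b| :=
          Finset.sum_congr rfl fun b hb => by rw [if_neg (Finset.ne_of_mem_erase hb), mul_one]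
      _ ≤ ∑ _b ∈ Finset.univ.erase a, U :=
          Finset.sum_le_sum fun b hb => hU b (Finset.ne_of_mem_erase hb)
      _ ≤ Fintype.card ι * U := by
          rw [Finset.sum_const, nsmul_eq_mul]
          gcongr
          exact_mod_cast Finset.card_erase_le
      _ < A a a * (if a = a then (U + 1)⁻¹ else 1) := by
          rw [if_pos rfl, ← div_eq_mul_inv, lt_div_iff₀ hU₁]
          linarith
  · have hrow : ∀ b ∈ Finset.univ.erase a, |A a b| * (if b = k then (U + 1)⁻¹ else 1) =
        if b = k then |A k a| * (U + 1)⁻¹ else 0 := fun b hb => by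
      split_ifs with hbk
      · rw [hbk, hA.apply]
      · rw [hblock a b hak hbk, one_apply_ne (Finset.ne_of_mem_erase hb).symm, abs_zero, zero_mul]
    rw [Finset.sum_congr rfl hrow, Finset.sum_ite_eq',
      if_pos (Finset.mem_erase.mpr ⟨Ne.symm hak, Finset.mem_univ k⟩), if_neg hak,
      hblock a a hak hak, one_apply_eq, one_mul, ← div_eq_mul_inv, div_lt_one hU₁]
    linarith [hU a hak]

end Matrix

section SymmetricMatrix

variable {n : ℕ}

def symVar (a b : Fin n) : SymVar n := ⟨(min a b, max a b), min_le_max⟩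

theorem symVar_self (v : SymVar n) : symVar v.1.1 v.1.2 = v := by
  obtain ⟨⟨a, b⟩, h⟩ := v
  simp [symVar, h]

theorem symVar_comm (a b : Fin n) : symVar a b = symVar b a := by
  simp [symVar, min_comm, max_comm]

theorem symVar_fst_eq_snd_iff {a b : Fin n} : (symVar a b).1.1 = (symVar a b).1.2 ↔ a = b := by
  rcases le_total a b with h | h <;> simp [symVar, h, eq_comm]

theorem symVar_eq_diag_iff {a b k : Fin n} :
    symVar a b = ⟨(k, k), le_refl k⟩ ↔ a = k ∧ b = k := by
  rcases le_total a b with h | h <;> simp [symVar, Subtype.ext_iff, h, and_comm]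

def symMatrix (y : SymVar n → ℂ) : Matrix (Fin n) (Fin n) ℂ := Matrix.of fun a b => y (symVar a b)

theorem isSymm_symMatrix (y : SymVar n → ℂ) : (symMatrix y).IsSymm :=
  Matrix.IsSymm.ext fun a b => by simp [symMatrix, symVar_comm]

theorem evalMat_symMatrix (y : SymVar n → ℂ) (f : MvPolynomial (SymVar n) ℂ) :
    evalMat (symMatrix y) f = MvPolynomial.eval y f := by
  simp [evalMat, symMatrix, symVar_self]

def rowWeight (k : Fin n) (v : SymVar n) : ℕ := if v.1.1 = k ∨ v.1.2 = k then 1 else 0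

theorem rowWeight_symVar {a b k : Fin n} :
    rowWeight k (symVar a b) = if a = k ∨ b = k then 1 else 0 := by
  rcases le_total a b with h | h <;> simp [rowWeight, symVar, h, or_comm]

theorem exists_posDef_im_symMatrix_update {k : Fin n} (z : SymVar n → ℂ)
    (hz : ∀ a b, a ≠ k → b ≠ k → (z (symVar a b)).im = (1 : Matrix (Fin n) (Fin n) ℝ) a b) :
    ∃ R : ℝ, ((symMatrix (Function.update z ⟨(k, k), le_refl k⟩ (R * Complex.I))).map
      Complex.im).PosDef := by
  set U := ∑ u, |(z u).im|
  refine ⟨n * U * (U + 1) + 1, ?_⟩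
  set y := Function.update z ⟨(k, k), le_refl k⟩ (((n * U * (U + 1) + 1 : ℝ) : ℂ) * Complex.I)
  have hy : ∀ a b, ¬(a = k ∧ b = k) → y (symVar a b) = z (symVar a b) := fun a b h =>
    Function.update_of_ne (mt symVar_eq_diag_iff.mp h) _ _
  refine Matrix.posDef_of_one_bordered (U := U) ((isSymm_symMatrix y).map _) k
    (fun a b ha hb => ?_) (Finset.sum_nonneg fun _ _ => abs_nonneg _) (fun b hb => ?_) ?_
  · simp only [Matrix.map_apply, symMatrix, Matrix.of_apply, hy a b (fun h => ha h.1), hz a b ha hb]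
  · simp only [Matrix.map_apply, symMatrix, Matrix.of_apply, hy k b (fun h => hb h.2)]
    exact Finset.single_le_sum (f := fun u => |(z u).im|) (fun _ _ => abs_nonneg _)
      (Finset.mem_univ _)
  · simp [symMatrix, symVar_eq_diag_iff.mpr ⟨rfl, rfl⟩, y]

end SymmetricMatrix

theorem PsdStable.diag_mem_vars_of_mem_vars {n : ℕ} {f : MvPolynomial (SymVar n) ℂ}
    (hf : PsdStable f) {k : Fin n} {v : SymVar n} (hv : v ∈ f.vars) (hvk : v.1.1 = k ∨ v.1.2 = k) :
    ⟨(k, k), le_refl k⟩ ∈ f.vars := by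
  classical
  by_contra hkk
  obtain ⟨α, hα, hαv⟩ := (mem_vars_iff_mem_support v).mp hv
  set w := rowWeight k
  set d := Finsupp.weight w α
  have hd : d ≠ 0 := by
    have hwd : w v ≤ d := Finsupp.le_weight_of_ne_zero' w (Finsupp.mem_support_iff.mp hαv)
    simp only [w, rowWeight, if_pos hvk] at hwd
    omega
  have hg : weightedHomogeneousComponent w d f ≠ 0 := fun h0 => by
    have hcoeff := congrArg (coeff α) h0
    rw [coeff_weightedHomogeneousComponent, if_pos rfl, coeff_zero] at hcoeff
    exact mem_support_iff.mp hα hcoeff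
  set s : SymVar n → Set ℂ := fun u => {z | z.im = if u.1.1 = u.1.2 then 1 else 0}
  have hs : ∀ u, (s u).Infinite := fun u =>
    Set.infinite_of_injective_forall_mem
      (f := fun r : ℝ => (⟨r, if u.1.1 = u.1.2 then 1 else 0⟩ : ℂ))
      (fun _ _ h => congrArg Complex.re h) fun _ => rfl
  obtain ⟨x, hx, hxg⟩ := exists_mem_pi_eval_ne_zero hg s hs
  obtain ⟨τ, hτ⟩ := exists_eval_mul_pow_eq_zero f w x hd hxg
  set z := fun u => x u * τ ^ w u
  have hz : ∀ a b, a ≠ k → b ≠ k → (z (symVar a b)).im = (1 : Matrix (Fin n) (Fin n) ℝ) a b := by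
    intro a b ha hb
    have hw : w (symVar a b) = 0 := by simp [w, rowWeight_symVar, ha, hb]
    simpa [z, hw, s, symVar_fst_eq_snd_iff, Matrix.one_apply] using
      Set.mem_univ_pi.mp hx (symVar a b)
  obtain ⟨R, hR⟩ := exists_posDef_im_symMatrix_update z hz
  refine hf _ (isSymm_symMatrix _) hR ?_
  rw [evalMat_symMatrix, eval_update_of_notMem_vars hkk]
  exact hτ

/-- If an off-diagonal variable `z_ij` (with `i < j`) occurs in a psd-stable
polynomial `f`, then the diagonal variables `z_ii` and `z_jj` also occur in `f`. -/
theorem offdiag_occurs_implies_diag_occurs {n : ℕ} (f : MvPolynomial (SymVar n) ℂ)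
    (hf : PsdStable f) (i j : Fin n) (hij : i < j)
    (hoccur : ∃ α ∈ f.support, α ⟨(i, j), le_of_lt hij⟩ ≠ 0) :
    (∃ α ∈ f.support, α ⟨(i, i), le_refl i⟩ ≠ 0) ∧
    (∃ α ∈ f.support, α ⟨(j, j), le_refl j⟩ ≠ 0) := by
  have hvars : ∀ v, (∃ α ∈ f.support, α v ≠ 0) ↔ v ∈ f.vars := fun v => by
    simp [mem_vars_iff_mem_support, Finsupp.mem_support_iff]
  have hij_vars := (hvars _).mp hoccur
  exact ⟨(hvars _).mpr (hf.diag_mem_vars_of_mem_vars hij_vars (Or.inl rfl)),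
    (hvars _).mpr (hf.diag_mem_vars_of_mem_vars hij_vars (Or.inr rfl))⟩
end

section
/- Let f(Z) = c_α Z^α + c_β Z^β be a psd-stable binomial (c_α, c_β ≠ 0, α ≠ β) in the entries of a symmetric n×n matrix of variables Z. Then the total degrees of the two monomials Z^α and Z^β differ by at most 2. -/
open MvPolynomial

/-- The total degree of a monomial recorded by its exponent function: the sum
of the exponents of all variables. -/
def mdeg {n : ℕ} (α : SymVar n →₀ ℕ) : ℕ := α.sum fun _ e => e

/-! Restrict `f` to the ray `Z = w • (1 + J)`, `J` the all-ones matrix: for `0 < Im w` the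
imaginary part `(Im w) • (1 + J)` is positive definite, and `f` becomes
`a * w ^ |α| + b * w ^ |β|` with `a, b ≠ 0`. If `|α| ≥ |β| + 3`, the roots of
`w ^ (|α| - |β|) = -b / a` are spaced by an angle of at most `2π / 3 < π`, so one of them lies in
the upper half-plane. -/

lemma Complex.exists_im_pos_pow_eq {c : ℂ} (hc : c ≠ 0) {k : ℕ} (hk : 3 ≤ k) :
    ∃ w : ℂ, 0 < w.im ∧ w ^ k = c := by
  obtain ⟨j, hj_pos, hj_lt⟩ : ∃ j : ℕ, 0 < c.arg + j * (2 * Real.pi) ∧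
      c.arg + j * (2 * Real.pi) < k * Real.pi := by
    have harg_gt := Complex.neg_pi_lt_arg c
    have harg_le := Complex.arg_le_pi c
    have hk' : (3 : ℝ) ≤ k := by exact_mod_cast hk
    rcases lt_or_ge 0 c.arg with h | h
    · exact ⟨0, by simpa using h, by simp only [CharP.cast_eq_zero]; nlinarith [Real.pi_pos]⟩
    · exact ⟨1, by push_cast; linarith, by push_cast; nlinarith [Real.pi_pos]⟩
  have hk0 : (k : ℂ) ≠ 0 := by exact_mod_cast (show k ≠ 0 by omega)
  set z := (Complex.log c + j * (2 * Real.pi * Complex.I)) / k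
  have hz : z.im = (c.arg + j * (2 * Real.pi)) / k := by simp [z, Complex.log_im]
  refine ⟨Complex.exp z, ?_, ?_⟩
  · rw [Complex.exp_im, hz]
    refine mul_pos (Real.exp_pos _) (Real.sin_pos_of_pos_of_lt_pi (by positivity) ?_)
    rw [div_lt_iff₀ (by positivity)]
    linarith
  · rw [← Complex.exp_nat_mul, mul_div_cancel₀ _ hk0, Complex.exp_add, Complex.exp_log hc,
      Complex.exp_nat_mul_two_pi_mul_I, mul_one]

lemma le_add_two_of_forall_im_pos_ne_zero {A B : ℂ} (hA : A ≠ 0) (hB : B ≠ 0) {p q : ℕ}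
    (h : ∀ w : ℂ, 0 < w.im → A * w ^ p + B * w ^ q ≠ 0) : p ≤ q + 2 := by
  by_contra! hpq
  obtain ⟨w, hw, hwk⟩ := Complex.exists_im_pos_pow_eq (div_ne_zero (neg_ne_zero.2 hB) hA)
    (show 3 ≤ p - q by omega)
  apply h w hw
  rw [show p = q + (p - q) by omega, pow_add, hwk]
  field_simp
  ring

lemma Matrix.posDef_one_add_of_one {ι : Type*} [Fintype ι] [DecidableEq ι] :
    (1 + Matrix.of fun _ _ : ι => (1 : ℝ)).PosDef :=
  PosDef.one.add_posSemidef <| by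
    simpa [vecMulVec] using posSemidef_vecMulVec_self_star (1 : ι → ℝ)

lemma MvPolynomial.eval_smul_monomial {σ R : Type*} [CommSemiring R] (w : R) (x : σ → R)
    (γ : σ →₀ ℕ) (c : R) :
    eval (w • x) (monomial γ c) = w ^ γ.degree * eval x (monomial γ c) := by
  simp only [eval_monomial, Finsupp.prod, Pi.smul_apply, smul_eq_mul, mul_pow,
    Finset.prod_mul_distrib, Finset.prod_pow_eq_pow_sum, Finsupp.degree_apply]
  ring

lemma MvPolynomial.eval_monomial_ne_zero {σ R : Type*} [CommSemiring R] [NoZeroDivisors R]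
    [Nontrivial R] {x : σ → R} (hx : ∀ i, x i ≠ 0) (γ : σ →₀ ℕ) {c : R} (hc : c ≠ 0) :
    eval x (monomial γ c) ≠ 0 := by
  rw [eval_monomial]
  exact mul_ne_zero hc (Finsupp.prod_ne_zero_iff.2 fun i _ => pow_ne_zero _ (hx i))

section evalMat

variable {n : ℕ}

lemma evalMat_add (M : Matrix (Fin n) (Fin n) ℂ) (f g : MvPolynomial (SymVar n) ℂ) :
    evalMat M (f + g) = evalMat M f + evalMat M g :=
  map_add _ f g

lemma evalMat_smul_monomial (w : ℂ) (M : Matrix (Fin n) (Fin n) ℂ) (γ : SymVar n →₀ ℕ)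
    (c : ℂ) : evalMat (w • M) (monomial γ c) = w ^ mdeg γ * evalMat M (monomial γ c) :=
  eval_smul_monomial w _ γ c

lemma evalMat_monomial_ne_zero {M : Matrix (Fin n) (Fin n) ℂ} (hM : ∀ i j, M i j ≠ 0)
    (γ : SymVar n →₀ ℕ) {c : ℂ} (hc : c ≠ 0) : evalMat M (monomial γ c) ≠ 0 :=
  eval_monomial_ne_zero (fun _ => hM _ _) γ hc

lemma PsdStable.evalMat_smul_one_add_of_one_ne_zero {f : MvPolynomial (SymVar n) ℂ}
    (hf : PsdStable f) {w : ℂ} (hw : 0 < w.im) :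
    evalMat (w • (1 + Matrix.of fun _ _ => 1)) f ≠ 0 := by
  refine hf _ ((Matrix.isSymm_one.add ?_).smul w) ?_
  · exact Matrix.IsSymm.ext fun _ _ => rfl
  · have him : (w • (1 + Matrix.of fun _ _ => 1) : Matrix (Fin n) (Fin n) ℂ).map Complex.im
        = w.im • (1 + Matrix.of fun _ _ => (1 : ℝ)) := by
      ext i j
      by_cases hij : i = j <;> simp [hij, one_add_one_eq_two, mul_two]
    rw [him]
    exact Matrix.posDef_one_add_of_one.smul hw

end evalMat

theorem psdStable_binomial_degree_gap_general {n : ℕ} (α β : SymVar n →₀ ℕ)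
    (cα cβ : ℂ) (hcα : cα ≠ 0) (hcβ : cβ ≠ 0)
    (hf : PsdStable (monomial α cα + monomial β cβ)) :
    mdeg α ≤ mdeg β + 2 ∧ mdeg β ≤ mdeg α + 2 := by
  set N : Matrix (Fin n) (Fin n) ℂ := 1 + Matrix.of fun _ _ => 1
  have hN : ∀ i j, N i j ≠ 0 := fun i j => by
    by_cases hij : i = j <;> simp [N, hij]
  set a := evalMat N (monomial α cα)
  set b := evalMat N (monomial β cβ)
  have ha : a ≠ 0 := evalMat_monomial_ne_zero hN α hcα
  have hb : b ≠ 0 := evalMat_monomial_ne_zero hN β hcβ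
  have hray : ∀ w : ℂ, 0 < w.im → a * w ^ mdeg α + b * w ^ mdeg β ≠ 0 := fun w hw => by
    have := hf.evalMat_smul_one_add_of_one_ne_zero hw
    rwa [evalMat_add, evalMat_smul_monomial, evalMat_smul_monomial, mul_comm _ a,
      mul_comm _ b] at this
  exact ⟨le_add_two_of_forall_im_pos_ne_zero ha hb hray,
    le_add_two_of_forall_im_pos_ne_zero hb ha fun w hw => by rw [add_comm]; exact hray w hw⟩

/-- The total degrees of the two monomials of a psd-stable binomial differ by
at most 2. -/
theorem psdStable_binomial_degree_gap {n : ℕ} (α β : SymVar n →₀ ℕ)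
    (cα cβ : ℂ) (hcα : cα ≠ 0) (hcβ : cβ ≠ 0) (hne : α ≠ β)
    (hf : PsdStable (monomial α cα + monomial β cβ)) :
    mdeg α ≤ mdeg β + 2 ∧ mdeg β ≤ mdeg α + 2 :=
  psdStable_binomial_degree_gap_general α β cα cβ hcα hcβ hf
end
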